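/- arXiv:2107.01386 — 2 statements merged into one kernel-verified Lean document; each statement's English description precedes it below -/
import Mathlib

section
/- There exist constants C > 0 and δ₀ > 0 such that for every 0 < δ < δ₀ and every v ∈ S_δ(Ω), ‖v‖²_{L²(Ω)} ≤ C |v|²_{S_δ(Ω)} (nonlocal Poincaré inequality); in particular |·|_{S_δ(Ω)} is a norm on S_δ(Ω). -/
/-!
Extend `v` by zero outside `Ω`. As `Ω` is bounded, `N ≈ diam Ω / h` steps of length `h` in a fixed
direction lead from any point of `Ω` out of `Ω`, so telescoping and Cauchy–Schwarz give
`‖v‖² ≤ N² ‖v(· + h e) - v‖²`. Comparing `v (x + h e)` and `v x` with `v y` for `y ∈ B(x, h)` and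
averaging over `y` bounds `|B_h| ‖v(· + h e) - v‖²` by the energy of the pairs at distance `< 2h`.
With `h = r₀ δ / 2`, where `γ₁ r₀ > 0`, monotonicity gives `γ_δ ≥ γ₁ r₀ δ^(-(d+2))` on such pairs;
they only matter when one point lies in `Ω`, and then both lie in `Ω ∪ Ω_δ`. The powers of `δ`
cancel: `N² δ^(d+2) / h^d` stays bounded.
-/

open MeasureTheory Metric Set Filter

noncomputable section

/-- Euclidean space ℝ^d. -/
abbrev Eu (d : ℕ) : Type := EuclideanSpace ℝ (Fin d)

/-- The nonlocal boundary collar Ω_δ = {x ∉ Ω : dist(x, ∂Ω) < δ}. -/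
def NLcollar (d : ℕ) (Ω : Set (Eu d)) (δ : ℝ) : Set (Eu d) :=
  {x | x ∉ Ω ∧ Metric.infDist x (frontier Ω) < δ}

/-- The extended domain Ω ∪ Ω_δ. -/
def NLdom (d : ℕ) (Ω : Set (Eu d)) (δ : ℝ) : Set (Eu d) := Ω ∪ NLcollar d Ω δ

/-- The rescaled kernel γ_δ(r) = δ^{-(d+2)} γ₁(r/δ). -/
def NLker (d : ℕ) (γ₁ : ℝ → ℝ) (δ r : ℝ) : ℝ := (δ ^ (d + 2))⁻¹ * γ₁ (r / δ)

/-- The squared nonlocal energy seminorm |u|²_{S_δ(Ω)}. -/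
def NLenergySq (d : ℕ) (Ω : Set (Eu d)) (γ₁ : ℝ → ℝ) (δ : ℝ) (u : Eu d → ℝ) : ℝ :=
  ∫ x in NLdom d Ω δ, ∫ y in NLdom d Ω δ, NLker d γ₁ δ (dist y x) * (u y - u x) ^ 2

/-- Membership in the nonlocal energy space S_δ(Ω): u ∈ L²(Ω∪Ω_δ), finite nonlocal
energy, and u = 0 a.e. on the collar Ω_δ. -/
def NLMemS (d : ℕ) (Ω : Set (Eu d)) (γ₁ : ℝ → ℝ) (δ : ℝ) (u : Eu d → ℝ) : Prop :=
  MemLp u 2 (volume.restrict (NLdom d Ω δ)) ∧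
  IntegrableOn
    (fun p : Eu d × Eu d => NLker d γ₁ δ (dist p.2 p.1) * (u p.2 - u p.1) ^ 2)
    (NLdom d Ω δ ×ˢ NLdom d Ω δ) ∧
  ∀ᵐ x ∂(volume.restrict (NLcollar d Ω δ)), u x = 0

/-- The bilinear form T_δ with coefficient A. -/
def NLTform (d : ℕ) (Ω : Set (Eu d)) (γ₁ : ℝ → ℝ) (δ : ℝ)
    (A : Eu d → Eu d → ℝ) (v w : Eu d → ℝ) : ℝ :=
  ∫ x in NLdom d Ω δ, ∫ y in NLdom d Ω δ,
    A x y * NLker d γ₁ δ (dist x y) * (v y - v x) * (w y - w x)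

open scoped ENNReal

theorem infDist_frontier_le_dist {E : Type*} [NormedAddCommGroup E] [NormedSpace ℝ E]
    [FiniteDimensional ℝ E] {Ω : Set E} {x y : E} (hx : x ∈ Ω) (hy : y ∉ Ω) :
    infDist y (frontier Ω) ≤ dist y x := by
  obtain ⟨z, hz, hyz⟩ := exists_mem_frontier_infDist_compl_eq_dist (s := Ωᶜ) hy
    (ne_univ_iff_exists_notMem _ |>.mpr ⟨x, not_not.mpr hx⟩)
  rw [frontier_compl, compl_compl] at *
  calc infDist y (frontier Ω) ≤ dist y z := infDist_le_dist_of_mem hz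
    _ = infDist y Ω := hyz.symm
    _ ≤ dist y x := infDist_le_dist_of_mem hx

theorem sq_le_mul_sum_sq_sub (f : ℕ → ℝ) {N : ℕ} (hN : f N = 0) :
    f 0 ^ 2 ≤ N * ∑ k ∈ Finset.range N, (f (k + 1) - f k) ^ 2 := by
  have htel : f 0 = -∑ k ∈ Finset.range N, (f (k + 1) - f k) := by
    rw [Finset.sum_range_sub, hN]; ring
  rw [htel, neg_sq]
  simpa using sq_sum_le_card_mul_sum_sq (s := Finset.range N) (f := fun k => f (k + 1) - f k)

theorem ENNReal.ofReal_sq_add_le (s t : ℝ) :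
    ENNReal.ofReal ((s + t) ^ 2) ≤ 2 * (ENNReal.ofReal (s ^ 2) + ENNReal.ofReal (t ^ 2)) := by
  rw [← ENNReal.ofReal_add (sq_nonneg _) (sq_nonneg _), ← ENNReal.ofReal_ofNat 2,
    ← ENNReal.ofReal_mul zero_le_two]
  exact ENNReal.ofReal_le_ofReal (by nlinarith [sq_nonneg (s - t)])

theorem lintegral_sq_le_sq_mul_lintegral_sq_sub_add {G : Type*} [MeasurableSpace G] [AddGroup G]
    [MeasurableAdd G] {μ : Measure G} [μ.IsAddRightInvariant] {w : G → ℝ} (hw : Measurable w)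
    {a : G} {N : ℕ} (hN : ∀ᵐ x ∂μ, w x ≠ 0 → w (x + N • a) = 0) :
    ∫⁻ x, ENNReal.ofReal (w x ^ 2) ∂μ ≤
      N ^ 2 * ∫⁻ x, ENNReal.ofReal ((w (x + a) - w x) ^ 2) ∂μ := by
  set step : ℕ → G → ℝ≥0∞ := fun k x => ENNReal.ofReal ((w (x + (k + 1) • a) - w (x + k • a)) ^ 2)
  have hstep : ∀ k, ∫⁻ x, step k x ∂μ = ∫⁻ x, ENNReal.ofReal ((w (x + a) - w x) ^ 2) ∂μ := by
    intro k
    simp only [step, succ_nsmul, ← add_assoc]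
    exact lintegral_add_right_eq_self (fun x => ENNReal.ofReal ((w (x + a) - w x) ^ 2)) (k • a)
  have hpt : ∀ᵐ x ∂μ, ENNReal.ofReal (w x ^ 2) ≤ N * ∑ k ∈ Finset.range N, step k x := by
    filter_upwards [hN] with x hx
    by_cases hwx : w x = 0
    · simp [hwx]
    have := sq_le_mul_sum_sq_sub (fun k => w (x + k • a)) (by simpa using hx hwx)
    simp only [zero_nsmul, add_zero] at this
    calc ENNReal.ofReal (w x ^ 2) ≤ ENNReal.ofReal
          (N * ∑ k ∈ Finset.range N, (w (x + (k + 1) • a) - w (x + k • a)) ^ 2) :=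
        ENNReal.ofReal_le_ofReal this
      _ = N * ∑ k ∈ Finset.range N, step k x := by
        rw [ENNReal.ofReal_mul N.cast_nonneg, ENNReal.ofReal_natCast,
          ENNReal.ofReal_sum_of_nonneg fun _ _ => sq_nonneg _]
  have hmeas : ∀ k, Measurable (step k) := fun k =>
    (((hw.comp (measurable_add_const _)).sub (hw.comp (measurable_add_const _))).pow_const
      2).ennreal_ofReal
  calc ∫⁻ x, ENNReal.ofReal (w x ^ 2) ∂μ
      ≤ ∫⁻ x, N * ∑ k ∈ Finset.range N, step k x ∂μ := lintegral_mono_ae hpt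
    _ = N * ∑ k ∈ Finset.range N, ∫⁻ x, step k x ∂μ := by
      rw [lintegral_const_mul _ (Finset.measurable_sum _ fun k _ => hmeas k),
        lintegral_finsetSum _ fun k _ => hmeas k]
    _ = N ^ 2 * ∫⁻ x, ENNReal.ofReal ((w (x + a) - w x) ^ 2) ∂μ := by
      simp only [hstep, Finset.sum_const, Finset.card_range, nsmul_eq_mul]
      ring

section LocalEnergy

variable {E : Type*} [NormedAddCommGroup E] [NormedSpace ℝ E] [FiniteDimensional ℝ E]
  [MeasurableSpace E] [BorelSpace E]

def localEnergy (μ : Measure E) (w : E → ℝ) (r : ℝ) : ℝ≥0∞ :=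
  ∫⁻ x, ∫⁻ y in ball x r, ENNReal.ofReal ((w y - w x) ^ 2) ∂μ ∂μ

theorem measurable_setLIntegral_ball {μ : Measure E} [SFinite μ] {f : E × E → ℝ≥0∞}
    (hf : Measurable f) (r : ℝ) : Measurable fun x => ∫⁻ y in ball x r, f (x, y) ∂μ := by
  have hset : MeasurableSet {p : E × E | dist p.2 p.1 < r} :=
    measurableSet_lt (by fun_prop) measurable_const
  convert (hf.indicator hset).lintegral_prod_right' (ν := μ) using 2 with x
  rw [← lintegral_indicator measurableSet_ball]
  rfl

theorem lintegral_sq_sub_add_mul_measure_ball_le (μ : Measure E) [μ.IsAddHaarMeasure]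
    {w : E → ℝ} (hw : Measurable w) {a : E} {h : ℝ} (ha : ‖a‖ ≤ h) :
    (∫⁻ x, ENNReal.ofReal ((w (x + a) - w x) ^ 2) ∂μ) * μ (ball 0 h) ≤
      4 * localEnergy μ w (2 * h) := by
  set far : E → ℝ≥0∞ := fun x => ∫⁻ y in ball x h, ENNReal.ofReal ((w (x + a) - w y) ^ 2) ∂μ
  set near : E → ℝ≥0∞ := fun x => ∫⁻ y in ball x h, ENNReal.ofReal ((w y - w x) ^ 2) ∂μ
  have hpt : ∀ x, ENNReal.ofReal ((w (x + a) - w x) ^ 2) * μ (ball 0 h) ≤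
      2 * (far x + near x) := by
    intro x
    rw [← Measure.addHaar_ball_center μ x, ← setLIntegral_const]
    calc ∫⁻ _ in ball x h, ENNReal.ofReal ((w (x + a) - w x) ^ 2) ∂μ
        ≤ ∫⁻ y in ball x h, 2 * (ENNReal.ofReal ((w (x + a) - w y) ^ 2) +
            ENNReal.ofReal ((w y - w x) ^ 2)) ∂μ :=
          lintegral_mono fun y => by
            simpa using ENNReal.ofReal_sq_add_le (w (x + a) - w y) (w y - w x)
      _ = 2 * (far x + near x) := by
        rw [lintegral_const_mul' _ _ ENNReal.ofNat_ne_top,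
          lintegral_add_left (f := fun y => ENNReal.ofReal ((w (x + a) - w y) ^ 2)) (by fun_prop)]
  have hnear_meas : Measurable near := measurable_setLIntegral_ball
    ((((hw.comp measurable_snd).sub (hw.comp measurable_fst)).pow_const 2).ennreal_ofReal) h
  have hfar : ∫⁻ x, far x ∂μ ≤ localEnergy μ w (2 * h) := by
    rw [← lintegral_add_right_eq_self (μ := μ) _ (-a)]
    refine lintegral_mono fun x => ?_
    simp only [far, neg_add_cancel_right, sub_sq_comm (w x)]
    refine lintegral_mono_set fun y hy => ?_
    rw [mem_ball] at hy ⊢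
    calc dist y x ≤ dist y (x + -a) + dist (x + -a) x := dist_triangle _ _ _
      _ < h + h := add_lt_add_of_lt_of_le hy (by simpa using ha)
      _ = 2 * h := by ring
  have hnear : ∫⁻ x, near x ∂μ ≤ localEnergy μ w (2 * h) :=
    lintegral_mono fun x =>
      lintegral_mono_set (ball_subset_ball (by linarith [(norm_nonneg a).trans ha]))
  calc (∫⁻ x, ENNReal.ofReal ((w (x + a) - w x) ^ 2) ∂μ) * μ (ball 0 h)
      = ∫⁻ x, ENNReal.ofReal ((w (x + a) - w x) ^ 2) * μ (ball 0 h) ∂μ :=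
        (lintegral_mul_const' _ _ measure_ball_lt_top.ne).symm
    _ ≤ ∫⁻ x, 2 * (far x + near x) ∂μ := lintegral_mono hpt
    _ = 2 * (∫⁻ x, far x ∂μ + ∫⁻ x, near x ∂μ) := by
      rw [lintegral_const_mul' _ _ ENNReal.ofNat_ne_top, lintegral_add_right _ hnear_meas]
    _ ≤ 2 * (localEnergy μ w (2 * h) + localEnergy μ w (2 * h)) := by gcongr
    _ = 4 * localEnergy μ w (2 * h) := by ring

theorem lintegral_sq_mul_measure_ball_le_localEnergy [Nontrivial E] (μ : Measure E)
    [μ.IsAddHaarMeasure] {w : E → ℝ} (hw : Measurable w) {Ω : Set E}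
    (hΩ : Bornology.IsBounded Ω) (hwΩ : ∀ᵐ x ∂μ, w x ≠ 0 → x ∈ Ω) {h : ℝ} (hh : 0 < h) :
    (∫⁻ x, ENNReal.ofReal (w x ^ 2) ∂μ) * μ (ball 0 h) ≤
      ENNReal.ofReal (4 * (diam Ω / h + 1) ^ 2) * localEnergy μ w (2 * h) := by
  obtain ⟨a, ha⟩ := exists_norm_eq E hh.le
  set N := ⌊diam Ω / h⌋₊ + 1
  have hN : (N : ℝ) ≤ diam Ω / h + 1 := by
    push_cast [N]
    gcongr
    exact Nat.floor_le (div_nonneg diam_nonneg hh.le)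
  have hescape : ∀ x ∈ Ω, x + N • a ∉ Ω := by
    intro x hx hxa
    have hdiam : diam Ω < N * h := by
      have := Nat.lt_floor_add_one (diam Ω / h)
      push_cast [N]
      rwa [div_lt_iff₀ hh] at this
    have := dist_le_diam_of_mem hΩ hxa hx
    rw [dist_eq_norm, add_sub_cancel_left, RCLike.norm_nsmul ℝ, ha, nsmul_eq_mul] at this
    linarith
  have hvanish : ∀ᵐ x ∂μ, w x ≠ 0 → w (x + N • a) = 0 := by
    filter_upwards [hwΩ, (measurePreserving_add_right μ (N • a)).quasiMeasurePreserving.ae hwΩ]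
      with x hx hxa hwx
    by_contra hne
    exact hescape x (hx hwx) (hxa hne)
  calc (∫⁻ x, ENNReal.ofReal (w x ^ 2) ∂μ) * μ (ball 0 h)
      ≤ (N ^ 2 * ∫⁻ x, ENNReal.ofReal ((w (x + a) - w x) ^ 2) ∂μ) * μ (ball 0 h) := by
        gcongr
        exact lintegral_sq_le_sq_mul_lintegral_sq_sub_add hw hvanish
    _ ≤ N ^ 2 * (4 * localEnergy μ w (2 * h)) := by
        rw [mul_assoc]
        exact mul_le_mul_right (lintegral_sq_sub_add_mul_measure_ball_le μ hw ha.le) _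
    _ = ENNReal.ofReal (4 * N ^ 2) * localEnergy μ w (2 * h) := by
        rw [ENNReal.ofReal_mul zero_le_four, ENNReal.ofReal_pow N.cast_nonneg,
          ENNReal.ofReal_natCast, ENNReal.ofReal_ofNat]
        ring
    _ ≤ ENNReal.ofReal (4 * (diam Ω / h + 1) ^ 2) * localEnergy μ w (2 * h) := by
        gcongr

end LocalEnergy

theorem exists_mem_Ioo_pos_of_setIntegral_ball_ne_zero {E : Type*} [NormedAddCommGroup E]
    [MeasurableSpace E] {μ : Measure E} {γ₁ : ℝ → ℝ} (hγ0 : ∀ r, 0 ≤ γ₁ r)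
    (hγ : ∫ z in ball (0 : E) 1, γ₁ ‖z‖ * ‖z‖ ^ 2 ∂μ ≠ 0) : ∃ r₀ ∈ Ioo 0 1, 0 < γ₁ r₀ := by
  contrapose! hγ
  refine setIntegral_eq_zero_of_forall_eq_zero fun z hz => ?_
  rcases eq_or_ne z 0 with rfl | hz0
  · simp
  · rw [le_antisymm (hγ _ ⟨norm_pos_iff.mpr hz0, mem_ball_zero_iff.mp hz⟩) (hγ0 _), zero_mul]

section Nonlocal

variable {d : ℕ} {Ω : Set (Eu d)} {γ₁ : ℝ → ℝ} {δ : ℝ}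

theorem mem_NLdom_of_dist_lt {x y : Eu d} (hx : x ∈ Ω) (hxy : dist y x < δ) : y ∈ NLdom d Ω δ := by
  by_cases hy : y ∈ Ω
  · exact Or.inl hy
  · exact Or.inr ⟨hy, (infDist_frontier_le_dist hx hy).trans_lt hxy⟩

theorem measurableSet_NLcollar (hΩ : MeasurableSet Ω) :
    MeasurableSet (NLcollar d Ω δ) :=
  hΩ.compl.inter (measurableSet_lt (continuous_infDist_pt _).measurable measurable_const)

theorem measurableSet_NLdom (hΩ : MeasurableSet Ω) :
    MeasurableSet (NLdom d Ω δ) :=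
  hΩ.union (measurableSet_NLcollar hΩ)

theorem NLker_nonneg (hγ0 : ∀ r, 0 ≤ γ₁ r) (hδ : 0 < δ) (r : ℝ) :
    0 ≤ NLker d γ₁ δ r :=
  mul_nonneg (by positivity) (hγ0 _)

theorem inv_pow_mul_le_NLker (hγmono : AntitoneOn γ₁ (Ici 0)) {r₀ r : ℝ}
    (hδ : 0 < δ) (hr : 0 ≤ r) (hrr₀ : r ≤ r₀ * δ) :
    (δ ^ (d + 2))⁻¹ * γ₁ r₀ ≤ NLker d γ₁ δ r := by
  have hrδ : r / δ ≤ r₀ := (div_le_iff₀ hδ).mpr hrr₀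
  exact mul_le_mul_of_nonneg_left
    (hγmono (div_nonneg hr hδ.le) ((div_nonneg hr hδ.le).trans hrδ) hrδ) (by positivity)

theorem ofReal_NLenergySq (hγ0 : ∀ r, 0 ≤ γ₁ r) (hδ : 0 < δ) {v : Eu d → ℝ}
    (hv : IntegrableOn (fun p : Eu d × Eu d => NLker d γ₁ δ (dist p.2 p.1) * (v p.2 - v p.1) ^ 2)
      (NLdom d Ω δ ×ˢ NLdom d Ω δ)) :
    ENNReal.ofReal (NLenergySq d Ω γ₁ δ v) = ∫⁻ p in NLdom d Ω δ ×ˢ NLdom d Ω δ,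
      ENNReal.ofReal (NLker d γ₁ δ (dist p.2 p.1) * (v p.2 - v p.1) ^ 2) := by
  rw [Measure.volume_eq_prod] at hv
  rw [NLenergySq, Measure.volume_eq_prod, ← setIntegral_prod _ hv,
    ofReal_integral_eq_lintegral_ofReal hv
      (ae_of_all _ fun p => mul_nonneg (NLker_nonneg hγ0 hδ _) (sq_nonneg _))]

theorem NLMemS.exists_measurable_eq (hΩ : MeasurableSet Ω) {v : Eu d → ℝ}
    (hv : NLMemS d Ω γ₁ δ v) : ∃ w : Eu d → ℝ, Measurable w ∧
      (∀ᵐ x, x ∈ NLdom d Ω δ → w x = v x) ∧ ∀ᵐ x, w x ≠ 0 → x ∈ Ω := by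
  obtain ⟨hvL2, -, hv0⟩ := hv
  have hS : MeasurableSet (NLdom d Ω δ) := measurableSet_NLdom hΩ
  set w := (NLdom d Ω δ).indicator (hvL2.1.mk v)
  have hwv : w =ᵐ[volume.restrict (NLdom d Ω δ)] v :=
    (indicator_ae_eq_restrict hS).trans hvL2.1.ae_eq_mk.symm
  have hw0 : ∀ᵐ x, x ∈ NLcollar d Ω δ → w x = 0 := by
    refine (ae_restrict_iff' (measurableSet_NLcollar hΩ)).mp ?_
    filter_upwards [ae_restrict_of_ae_restrict_of_subset subset_union_right hwv, hv0]
      with x hwvx hvx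
    rw [hwvx, hvx]
  refine ⟨w, hvL2.1.stronglyMeasurable_mk.measurable.indicator hS,
    (ae_restrict_iff' hS).mp hwv, ?_⟩
  filter_upwards [hw0] with x hx hwx
  rcases (support_indicator_subset hwx : x ∈ NLdom d Ω δ) with hxΩ | hxcollar
  · exact hxΩ
  · exact absurd (hx hxcollar) hwx

theorem NLenergySq_nonneg (hγ0 : ∀ r, 0 ≤ γ₁ r) (hδ : 0 < δ) (v : Eu d → ℝ) :
    0 ≤ NLenergySq d Ω γ₁ δ v :=
  integral_nonneg fun _ => integral_nonneg fun _ =>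
    mul_nonneg (NLker_nonneg hγ0 hδ _) (sq_nonneg _)

theorem ofReal_sq_sub_le_of_dist_lt (hγmono : AntitoneOn γ₁ (Ici 0)) {r₀ : ℝ} (hδ : 0 < δ)
    (hr₀ : r₀ ≤ 1) (hγr₀ : 0 < γ₁ r₀) {v w : Eu d → ℝ} {x y : Eu d} (hxy : dist y x < r₀ * δ)
    (hxv : x ∈ NLdom d Ω δ → w x = v x) (hyv : y ∈ NLdom d Ω δ → w y = v y)
    (hxΩ : w x ≠ 0 → x ∈ Ω) (hyΩ : w y ≠ 0 → y ∈ Ω) :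
    ENNReal.ofReal ((w y - w x) ^ 2) ≤ ENNReal.ofReal (δ ^ (d + 2) / γ₁ r₀) *
      (NLdom d Ω δ ×ˢ NLdom d Ω δ).indicator
        (fun p => ENNReal.ofReal (NLker d γ₁ δ (dist p.2 p.1) * (v p.2 - v p.1) ^ 2)) (x, y) := by
  by_cases hwxy : w y = w x
  · simp [hwxy]
  have hyx : dist y x < δ := hxy.trans_le (mul_le_of_le_one_left hδ.le hr₀)
  have hS : x ∈ NLdom d Ω δ ∧ y ∈ NLdom d Ω δ := by
    by_cases hwx : w x = 0
    · have hyΩ := hyΩ (hwx ▸ hwxy)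
      exact ⟨mem_NLdom_of_dist_lt hyΩ (by rwa [dist_comm]), Or.inl hyΩ⟩
    · exact ⟨Or.inl (hxΩ hwx), mem_NLdom_of_dist_lt (hxΩ hwx) hyx⟩
  have hker := inv_pow_mul_le_NLker (d := d) hγmono hδ dist_nonneg hxy.le
  rw [indicator_of_mem (mk_mem_prod hS.1 hS.2), ← hxv hS.1, ← hyv hS.2,
    ← ENNReal.ofReal_mul (by positivity)]
  refine ENNReal.ofReal_le_ofReal ?_
  calc (w y - w x) ^ 2 = δ ^ (d + 2) / γ₁ r₀ * ((δ ^ (d + 2))⁻¹ * γ₁ r₀) * (w y - w x) ^ 2 := by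
        field_simp
    _ ≤ δ ^ (d + 2) / γ₁ r₀ * (NLker d γ₁ δ (dist y x) * (w y - w x) ^ 2) := by
        rw [mul_assoc]
        gcongr

theorem localEnergy_le_NLenergySq (hΩ : MeasurableSet Ω) (hγ0 : ∀ r, 0 ≤ γ₁ r)
    (hγmono : AntitoneOn γ₁ (Ici 0)) {r₀ r : ℝ} (hδ : 0 < δ) (hr₀ : r₀ ≤ 1) (hγr₀ : 0 < γ₁ r₀)
    (hr : r ≤ r₀ * δ) {v w : Eu d → ℝ}
    (hv : IntegrableOn (fun p : Eu d × Eu d => NLker d γ₁ δ (dist p.2 p.1) * (v p.2 - v p.1) ^ 2)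
      (NLdom d Ω δ ×ˢ NLdom d Ω δ))
    (hwv : ∀ᵐ x, x ∈ NLdom d Ω δ → w x = v x) (hwΩ : ∀ᵐ x, w x ≠ 0 → x ∈ Ω) :
    localEnergy volume w r ≤
      ENNReal.ofReal (δ ^ (d + 2) / γ₁ r₀) * ENNReal.ofReal (NLenergySq d Ω γ₁ δ v) := by
  set S := NLdom d Ω δ
  set K := ENNReal.ofReal (δ ^ (d + 2) / γ₁ r₀)
  set g : Eu d × Eu d → ℝ≥0∞ := (S ×ˢ S).indicator fun p =>
    ENNReal.ofReal (NLker d γ₁ δ (dist p.2 p.1) * (v p.2 - v p.1) ^ 2)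
  have hS : MeasurableSet S := measurableSet_NLdom hΩ
  have hpt : ∀ᵐ x, ∀ᵐ y, (ball x r).indicator
      (fun y => ENNReal.ofReal ((w y - w x) ^ 2)) y ≤ K * g (x, y) := by
    filter_upwards [hwv, hwΩ] with x hxv hxΩ
    filter_upwards [hwv, hwΩ] with y hyv hyΩ
    by_cases hy : y ∈ ball x r
    · rw [indicator_of_mem hy]
      exact ofReal_sq_sub_le_of_dist_lt hγmono hδ hr₀ hγr₀ ((mem_ball.mp hy).trans_le hr)
        hxv hyv hxΩ hyΩ
    · rw [indicator_of_notMem hy]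
      exact zero_le
  have hg : AEMeasurable g (volume.prod volume) := by
    rw [aemeasurable_indicator_iff (hS.prod hS), ← Measure.volume_eq_prod]
    exact hv.aemeasurable.ennreal_ofReal
  calc localEnergy volume w r
      = ∫⁻ x, ∫⁻ y, (ball x r).indicator (fun y => ENNReal.ofReal ((w y - w x) ^ 2)) y := by
        rw [localEnergy]
        congr with x
        rw [lintegral_indicator measurableSet_ball]
    _ ≤ ∫⁻ x, ∫⁻ y, K * g (x, y) := lintegral_mono_ae (hpt.mono fun x hx => lintegral_mono_ae hx)
    _ = K * ∫⁻ p, g p ∂(volume.prod volume) := by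
        rw [lintegral_prod _ hg]
        simp only [lintegral_const_mul' K _ ENNReal.ofReal_ne_top]
    _ = K * ENNReal.ofReal (NLenergySq d Ω γ₁ δ v) := by
        rw [ofReal_NLenergySq hγ0 hδ hv, ← lintegral_indicator (hS.prod hS),
          Measure.volume_eq_prod]

theorem NLMemS.ofReal_integral_sq_mul_volume_ball_le [NeZero d] (hΩ : MeasurableSet Ω)
    (hΩbdd : Bornology.IsBounded Ω) (hγ0 : ∀ r, 0 ≤ γ₁ r) (hγmono : AntitoneOn γ₁ (Ici 0))
    {r₀ h : ℝ} (hr₀ : r₀ ≤ 1) (hγr₀ : 0 < γ₁ r₀) (hδ : 0 < δ) (hh : 0 < h) (hhδ : 2 * h ≤ r₀ * δ)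
    {v : Eu d → ℝ} (hv : NLMemS d Ω γ₁ δ v) :
    ENNReal.ofReal (∫ x in Ω, v x ^ 2) * volume (ball (0 : Eu d) h) ≤ ENNReal.ofReal
      (4 * (diam Ω / h + 1) ^ 2 * (δ ^ (d + 2) / γ₁ r₀) * NLenergySq d Ω γ₁ δ v) := by
  obtain ⟨w, hw, hwv, hwΩ⟩ := hv.exists_measurable_eq hΩ
  have hL2 : ENNReal.ofReal (∫ x in Ω, v x ^ 2) ≤ ∫⁻ x, ENNReal.ofReal (w x ^ 2) := by
    have hΩS : Ω ⊆ NLdom d Ω δ := subset_union_left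
    rw [ofReal_integral_eq_lintegral_ofReal (hv.1.integrable_sq.mono_measure
      (Measure.restrict_mono hΩS le_rfl)) (ae_of_all _ fun x => sq_nonneg _)]
    refine (lintegral_mono_ae ?_).trans (setLIntegral_le_lintegral _ _)
    filter_upwards [ae_restrict_of_ae_restrict_of_subset hΩS
      ((ae_restrict_iff' (measurableSet_NLdom hΩ)).mpr hwv)] with x hx
    rw [hx]
  calc ENNReal.ofReal (∫ x in Ω, v x ^ 2) * volume (ball (0 : Eu d) h)
      ≤ (∫⁻ x, ENNReal.ofReal (w x ^ 2)) * volume (ball (0 : Eu d) h) := by gcongr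
    _ ≤ ENNReal.ofReal (4 * (diam Ω / h + 1) ^ 2) * localEnergy volume w (2 * h) :=
        lintegral_sq_mul_measure_ball_le_localEnergy volume hw hΩbdd hwΩ hh
    _ ≤ ENNReal.ofReal (4 * (diam Ω / h + 1) ^ 2) *
        (ENNReal.ofReal (δ ^ (d + 2) / γ₁ r₀) * ENNReal.ofReal (NLenergySq d Ω γ₁ δ v)) := by
        gcongr
        exact localEnergy_le_NLenergySq hΩ hγ0 hγmono hδ hr₀ hγr₀ hhδ hv.2.1 hwv hwΩ
    _ = _ := by
        rw [← ENNReal.ofReal_mul (by positivity), ← ENNReal.ofReal_mul (by positivity)]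
        ring_nf

theorem NLMemS.integral_sq_le [NeZero d] (hΩ : MeasurableSet Ω)
    (hΩbdd : Bornology.IsBounded Ω) (hγ0 : ∀ r, 0 ≤ γ₁ r) (hγmono : AntitoneOn γ₁ (Ici 0))
    {r₀ : ℝ} (hr₀ : 0 < r₀) (hr₀1 : r₀ ≤ 1) (hγr₀ : 0 < γ₁ r₀) (hδ : 0 < δ) (hδ1 : δ ≤ 1)
    {v : Eu d → ℝ} (hv : NLMemS d Ω γ₁ δ v) :
    ∫ x in Ω, v x ^ 2 ≤ 4 * (2 * diam Ω / r₀ + 1) ^ 2 * (2 / r₀) ^ d /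
      (γ₁ r₀ * (volume (ball (0 : Eu d) 1)).toReal) * NLenergySq d Ω γ₁ δ v := by
  set h := r₀ * δ / 2 with h_def
  have hh : 0 < h := by positivity
  set b₁ := (volume (ball (0 : Eu d) 1)).toReal
  have hb₁ : 0 < b₁ := ENNReal.toReal_pos (measure_ball_pos _ _ one_pos).ne' measure_ball_lt_top.ne
  set D := diam Ω
  have hD : 0 ≤ D := diam_nonneg
  have hE := NLenergySq_nonneg (Ω := Ω) hγ0 hδ v
  have hmain := hv.ofReal_integral_sq_mul_volume_ball_le hΩ hΩbdd hγ0 hγmono hr₀1 hγr₀ hδ hh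
    (by rw [h_def]; linarith)
  have hball : volume (ball (0 : Eu d) h) = ENNReal.ofReal (h ^ d * b₁) := by
    rw [Measure.addHaar_ball _ _ hh.le, finrank_euclideanSpace_fin,
      ENNReal.ofReal_mul (by positivity), ENNReal.ofReal_toReal measure_ball_lt_top.ne]
  rw [hball, ← ENNReal.ofReal_mul (setIntegral_nonneg hΩ fun x _ => sq_nonneg _),
    ENNReal.ofReal_le_ofReal_iff (by positivity)] at hmain
  have hδD : (D / h + 1) * δ ≤ 2 * D / r₀ + 1 := by
    have : D / h * δ = 2 * D / r₀ := by
      rw [h_def]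
      field_simp
    linarith
  have hscale : (2 / r₀) ^ d * h ^ d = δ ^ d := by
    rw [← mul_pow, h_def]
    congr 1
    field_simp
  refine le_of_mul_le_mul_right (hmain.trans ?_) (by positivity : 0 < h ^ d * b₁)
  calc 4 * (D / h + 1) ^ 2 * (δ ^ (d + 2) / γ₁ r₀) * NLenergySq d Ω γ₁ δ v
      = 4 * ((D / h + 1) * δ) ^ 2 * δ ^ d / γ₁ r₀ * NLenergySq d Ω γ₁ δ v := by ring
    _ ≤ 4 * (2 * D / r₀ + 1) ^ 2 * δ ^ d / γ₁ r₀ * NLenergySq d Ω γ₁ δ v := by gcongr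
    _ = _ := by
      rw [← hscale]
      field_simp

end Nonlocal

theorem nonlocal_poincare_general
    (d : ℕ) (hd : 1 ≤ d) (Ω : Set (Eu d))
    (hΩopen : IsOpen Ω) (hΩbdd : Bornology.IsBounded Ω)
    (γ₁ : ℝ → ℝ) (hγ0 : ∀ r, 0 ≤ γ₁ r) (hγmono : AntitoneOn γ₁ (Ici 0))
    (hγnorm : (∫ z in ball (0 : Eu d) 1, γ₁ ‖z‖ * ‖z‖ ^ 2) = (d : ℝ)) :
    ∃ C > (0 : ℝ), ∃ δ₀ > (0 : ℝ), ∀ δ : ℝ, 0 < δ → δ < δ₀ →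
      ∀ v : Eu d → ℝ, NLMemS d Ω γ₁ δ v →
        (∫ x in Ω, (v x) ^ 2) ≤ C * NLenergySq d Ω γ₁ δ v := by
  have : NeZero d := ⟨by omega⟩
  obtain ⟨r₀, ⟨hr₀, hr₀1⟩, hγr₀⟩ := exists_mem_Ioo_pos_of_setIntegral_ball_ne_zero hγ0
    (by rw [hγnorm]; exact_mod_cast NeZero.ne d)
  have hb₁ : 0 < (volume (ball (0 : Eu d) 1)).toReal :=
    ENNReal.toReal_pos (measure_ball_pos _ _ one_pos).ne' measure_ball_lt_top.ne
  exact ⟨_, by positivity, 1, one_pos, fun δ hδ hδ1 v hv => hv.integral_sq_le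
    hΩopen.measurableSet hΩbdd hγ0 hγmono hr₀ hr₀1.le hγr₀ hδ hδ1.le⟩

/-- Nonlocal Poincaré inequality: there exist C > 0 and δ₀ > 0 such that for every
0 < δ < δ₀ and every v ∈ S_δ(Ω), ‖v‖²_{L²(Ω)} ≤ C |v|²_{S_δ(Ω)}. -/
theorem nonlocal_poincare
    (d : ℕ) (hd : 1 ≤ d) (Ω : Set (Eu d))
    (hΩopen : IsOpen Ω) (hΩbdd : Bornology.IsBounded Ω) (hΩne : Ω.Nonempty)
    (γ₁ : ℝ → ℝ) (hγ0 : ∀ r, 0 ≤ γ₁ r) (hγmono : AntitoneOn γ₁ (Ici 0))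
    (hγsupp : ∀ r, 1 < r → γ₁ r = 0)
    (hγnorm : (∫ z in ball (0 : Eu d) 1, γ₁ ‖z‖ * ‖z‖ ^ 2) = (d : ℝ)) :
    ∃ C > (0 : ℝ), ∃ δ₀ > (0 : ℝ), ∀ δ : ℝ, 0 < δ → δ < δ₀ →
      ∀ v : Eu d → ℝ, NLMemS d Ω γ₁ δ v →
        (∫ x in Ω, (v x) ^ 2) ≤ C * NLenergySq d Ω γ₁ δ v :=
  nonlocal_poincare_general d hd Ω hΩopen hΩbdd γ₁ hγ0 hγmono hγnorm
end
end

section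
/- Let A(x,y,ξ̂) := Ā(x,y) + Σ_{i=1}^N ξ̂_i ψ_i(x,y), where Ā, ψ₁, …, ψ_N ∈ L^∞((Ω∪Ω_δ)²) are real-valued and ξ̂ ∈ ℂ^N. Let 𝒜 ⊂ ℂ^N be an open set on which r_c/2 < Re A(x,y,ξ̂) and |A(x,y,ξ̂)| < 2R_c a.e. for some 0 < r_c ≤ R_c < ∞. Let f be a linear functional on S_δ(Ω;ℂ) with |⟨f,v⟩| ≤ M |v|_{S_δ(Ω;ℂ)} for all v, and for each ξ̂ ∈ 𝒜 let u(ξ̂) ∈ S_δ(Ω;ℂ) be the unique solution of T_δ^{A(·,·,ξ̂)}[u(ξ̂), v] = ⟨f, v⟩ for all v ∈ S_δ(Ω;ℂ). Then for every ξ̂ ∈ 𝒜 and every i ∈ {1,…,N}, the map ξ̂ ↦ u(ξ̂) admits a complex partial derivative in direction e_i: there exists w ∈ S_δ(Ω;ℂ) such that |(u(ξ̂ + ĥ e_i) − u(ξ̂))/ĥ − w|_{S_δ(Ω;ℂ)} → 0 as ĥ → 0 in ℂ \ {0}; in particular ξ̂ ↦ u(ξ̂) is holomorphic on 𝒜. 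-/
/-!
With `∇v(x, y) = √γ_δ(|y - x|) (v y - v x)`, the form `T_δ^B[v, w]` is `∫ B ∇v conj(∇w)` over the
pair space and `|v|_{S_δ}` is the `L²` norm of `∇v`. Since `A(ξ + h eᵢ) = A(ξ) + h ψᵢ`, the
difference quotients `E_h = (u(ξ + h eᵢ) - u(ξ)) / h` satisfy
`T^{A(ξ + h eᵢ)}[E_h, v] = -T^{ψᵢ}[u(ξ), v]`. Testing with `v = E_h` and with `v = E_h - E_h'`,
coercivity (`Re A > r_c / 2`) and the bound on `ψᵢ` give `|E_h| ≤ C` and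
`|E_h - E_h'| ≤ C' |h - h'|`. Hence `E_h` is Cauchy as `h → 0`, and it converges because
`S_δ(Ω;ℂ)` is complete: by the nonlocal Poincaré inequality, proved by sweeping `Ω` with slabs
and averaging over balls on which `γ_δ` is bounded below, energy-Cauchy sequences are also
`L²`-Cauchy, and the `L²` limit carries the limiting nonlocal gradient.
-/

open MeasureTheory Metric Set Filter

noncomputable section

/-- The squared complex nonlocal energy seminorm |u|²_{S_δ(Ω;ℂ)}. -/
def NLenergySqC (d : ℕ) (Ω : Set (Eu d)) (γ₁ : ℝ → ℝ) (δ : ℝ) (u : Eu d → ℂ) : ℝ :=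
  ∫ x in NLdom d Ω δ, ∫ y in NLdom d Ω δ, NLker d γ₁ δ (dist y x) * ‖u y - u x‖ ^ 2

/-- Membership in the complex nonlocal energy space S_δ(Ω;ℂ). -/
def NLMemSC (d : ℕ) (Ω : Set (Eu d)) (γ₁ : ℝ → ℝ) (δ : ℝ) (u : Eu d → ℂ) : Prop :=
  MemLp u 2 (volume.restrict (NLdom d Ω δ)) ∧
  IntegrableOn
    (fun p : Eu d × Eu d => NLker d γ₁ δ (dist p.2 p.1) * ‖u p.2 - u p.1‖ ^ 2)
    (NLdom d Ω δ ×ˢ NLdom d Ω δ) ∧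
  ∀ᵐ x ∂(volume.restrict (NLcollar d Ω δ)), u x = 0

/-- The sesquilinear form T_δ with complex coefficient B. -/
def NLTformC (d : ℕ) (Ω : Set (Eu d)) (γ₁ : ℝ → ℝ) (δ : ℝ)
    (B : Eu d → Eu d → ℂ) (v w : Eu d → ℂ) : ℂ :=
  ∫ x in NLdom d Ω δ, ∫ y in NLdom d Ω δ,
    B x y * (NLker d γ₁ δ (dist x y) : ℂ) * (v y - v x) * (starRingEnd ℂ) (w y - w x)

/-- The affine complex coefficient A(x,y,ξ̂) = Ā(x,y) + Σᵢ ξ̂ᵢ ψᵢ(x,y). -/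
def Acoef {d : ℕ} (N : ℕ) (Abar : Eu d → Eu d → ℝ) (ψ : Fin N → Eu d → Eu d → ℝ)
    (ξ : Fin N → ℂ) (x y : Eu d) : ℂ :=
  (Abar x y : ℂ) + ∑ i, ξ i * (ψ i x y : ℂ)

open scoped ENNReal ComplexConjugate Topology

namespace NonlocalDiffusion

section SesqForm

variable {β : Type*} [MeasurableSpace β] {μ : Measure β}

lemma sq_toReal_eLpNorm_two {E : Type*} [NormedAddCommGroup E] {f : β → E} (hf : MemLp f 2 μ) :
    (eLpNorm f 2 μ).toReal ^ 2 = ∫ p, ‖f p‖ ^ 2 ∂μ := by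
  rw [hf.eLpNorm_eq_integral_rpow_norm two_ne_zero ENNReal.ofNat_ne_top,
    ENNReal.toReal_ofReal (by positivity), ← Real.rpow_natCast, ← Real.rpow_mul (by positivity)]
  norm_num

lemma integral_norm_mul_norm_le {E : Type*} [NormedAddCommGroup E] {f g : β → E}
    (hf : MemLp f 2 μ) (hg : MemLp g 2 μ) :
    ∫ p, ‖f p‖ * ‖g p‖ ∂μ ≤ (eLpNorm f 2 μ).toReal * (eLpNorm g 2 μ).toReal := by
  have h := integral_mul_norm_le_Lp_mul_Lq Real.HolderConjugate.two_two
    (by simpa using hf) (by simpa using hg)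
  have hsqrt : ∀ {k : β → E}, MemLp k 2 μ →
      (∫ p, ‖k p‖ ^ (2 : ℝ) ∂μ) ^ (1 / (2 : ℝ)) = (eLpNorm k 2 μ).toReal := fun hk => by
    simp_rw [Real.rpow_two]
    rw [← Real.sqrt_eq_rpow, ← sq_toReal_eLpNorm_two hk, Real.sqrt_sq ENNReal.toReal_nonneg]
  rwa [hsqrt hf, hsqrt hg] at h

def sesqForm (μ : Measure β) (B f g : β → ℂ) : ℂ :=
  ∫ p, B p * (f p * conj (g p)) ∂μ

variable {B B' f f' g : β → ℂ} {K K' c : ℝ}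

lemma integrable_mul_conj (hf : MemLp f 2 μ) (hg : MemLp g 2 μ) :
    Integrable (fun p => f p * conj (g p)) μ :=
  hf.integrable_mul (hg.star (p := 2)) (p := 2) (q := 2)

lemma integrable_sesqForm (hB : AEStronglyMeasurable B μ) (hK : ∀ᵐ p ∂μ, ‖B p‖ ≤ K)
    (hf : MemLp f 2 μ) (hg : MemLp g 2 μ) :
    Integrable (fun p => B p * (f p * conj (g p))) μ :=
  (integrable_mul_conj hf hg).bdd_mul hB hK

lemma sesqForm_sub_left (hB : AEStronglyMeasurable B μ) (hK : ∀ᵐ p ∂μ, ‖B p‖ ≤ K)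
    (hf : MemLp f 2 μ) (hf' : MemLp f' 2 μ) (hg : MemLp g 2 μ) :
    sesqForm μ B (f - f') g = sesqForm μ B f g - sesqForm μ B f' g := by
  rw [sesqForm, sesqForm, sesqForm, ← integral_sub (integrable_sesqForm hB hK hf hg)
    (integrable_sesqForm hB hK hf' hg)]
  congr 1 with p
  simp only [Pi.sub_apply]
  ring

lemma sesqForm_smul_left (a : ℂ) : sesqForm μ B (a • f) g = a * sesqForm μ B f g := by
  rw [sesqForm, sesqForm, ← integral_const_mul]
  congr 1 with p
  simp only [Pi.smul_apply, smul_eq_mul]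
  ring

lemma sesqForm_add_smul_coef (hB : AEStronglyMeasurable B μ) (hK : ∀ᵐ p ∂μ, ‖B p‖ ≤ K)
    (hB' : AEStronglyMeasurable B' μ) (hK' : ∀ᵐ p ∂μ, ‖B' p‖ ≤ K')
    (hf : MemLp f 2 μ) (hg : MemLp g 2 μ) (a : ℂ) :
    sesqForm μ (B + a • B') f g = sesqForm μ B f g + a * sesqForm μ B' f g := by
  rw [sesqForm, sesqForm, sesqForm, ← integral_const_mul, ← integral_add
    (integrable_sesqForm hB hK hf hg) ((integrable_sesqForm hB' hK' hf hg).const_mul a)]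
  congr 1 with p
  simp only [Pi.add_apply, Pi.smul_apply, smul_eq_mul]
  ring

lemma mul_sq_le_re_sesqForm_self (hB : AEStronglyMeasurable B μ) (hK : ∀ᵐ p ∂μ, ‖B p‖ ≤ K)
    (hc : ∀ᵐ p ∂μ, c ≤ (B p).re) (hf : MemLp f 2 μ) :
    c * (eLpNorm f 2 μ).toReal ^ 2 ≤ (sesqForm μ B f f).re := by
  have hint := integrable_sesqForm hB hK hf hf
  rw [sq_toReal_eLpNorm_two hf, sesqForm, ← integral_const_mul, ← RCLike.re_to_complex,
    ← integral_re hint]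
  refine integral_mono_ae
    (((memLp_two_iff_integrable_sq_norm hf.1).mp hf).const_mul c) hint.re ?_
  filter_upwards [hc] with p hp
  rw [Complex.mul_conj, Complex.normSq_eq_norm_sq, RCLike.re_to_complex, Complex.re_mul_ofReal]
  exact mul_le_mul_of_nonneg_right hp (sq_nonneg _)

lemma norm_sesqForm_le (hB : AEStronglyMeasurable B μ) (hK0 : 0 ≤ K) (hK : ∀ᵐ p ∂μ, ‖B p‖ ≤ K)
    (hf : MemLp f 2 μ) (hg : MemLp g 2 μ) :
    ‖sesqForm μ B f g‖ ≤ K * ((eLpNorm f 2 μ).toReal * (eLpNorm g 2 μ).toReal) := by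
  have hfg : Integrable (fun p => ‖f p‖ * ‖g p‖) μ := by
    simpa using (integrable_mul_conj hf hg).norm
  calc ‖sesqForm μ B f g‖ ≤ ∫ p, K * (‖f p‖ * ‖g p‖) ∂μ := by
        refine (norm_integral_le_integral_norm _).trans (integral_mono_ae
          (integrable_sesqForm hB hK hf hg).norm (hfg.const_mul K) ?_)
        filter_upwards [hK] with p hp
        simp only [norm_mul, Complex.norm_conj]
        exact mul_le_mul_of_nonneg_right hp (by positivity)
    _ = K * ∫ p, ‖f p‖ * ‖g p‖ ∂μ := integral_const_mul K _
    _ ≤ K * ((eLpNorm f 2 μ).toReal * (eLpNorm g 2 μ).toReal) :=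
        mul_le_mul_of_nonneg_left (integral_norm_mul_norm_le hf hg) hK0

end SesqForm

section DifferenceQuotient

variable {β : Type*} [MeasurableSpace β] {μ : Measure β}

lemma le_div_of_mul_sq_le_mul {c a x : ℝ} (hc : 0 < c) (hx : 0 ≤ x) (ha : 0 ≤ a)
    (h : c * x ^ 2 ≤ a * x) : x ≤ a / c := by
  rcases hx.eq_or_lt with rfl | hx
  · positivity
  · rw [le_div_iff₀ hc]
    nlinarith

lemma re_neg_le_norm (z : ℂ) : (-z).re ≤ ‖z‖ := by
  simpa only [norm_neg] using Complex.re_le_norm (-z)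

lemma ae_norm_add_smul_le {B B' : β → ℂ} {K K' : ℝ} (hK : ∀ᵐ p ∂μ, ‖B p‖ ≤ K)
    (hK' : ∀ᵐ p ∂μ, ‖B' p‖ ≤ K') (a : ℂ) : ∀ᵐ p ∂μ, ‖(B + a • B') p‖ ≤ K + ‖a‖ * K' := by
  filter_upwards [hK, hK'] with p hp hp'
  calc ‖(B + a • B') p‖ ≤ ‖B p‖ + ‖a‖ * ‖B' p‖ := by
        simpa only [Pi.add_apply, Pi.smul_apply, norm_smul] using norm_add_le (B p) (a • B' p)
    _ ≤ K + ‖a‖ * K' := by gcongr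

/-- `U h` solves the variational problem with coefficient `A + h • P` on the test space `T`, for
every `h ∈ s`; the right-hand side, written as `sesqForm μ A (U 0)`, does not depend on `h`. -/
structure PerturbedSolutions (μ : Measure β) (A P : β → ℂ) (T : Submodule ℂ (β → ℂ))
    (s : Set ℂ) (U : ℂ → β → ℂ) : Prop where
  zero_mem : (0 : ℂ) ∈ s
  memLp : ∀ g ∈ T, MemLp g 2 μ
  mem : ∀ h ∈ s, U h ∈ T
  sesqForm_eq : ∀ h ∈ s, ∀ g ∈ T, sesqForm μ (A + h • P) (U h) g = sesqForm μ A (U 0) g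

variable {A P : β → ℂ} {T : Submodule ℂ (β → ℂ)} {s : Set ℂ} {U : ℂ → β → ℂ} {K Kp c : ℝ}

namespace PerturbedSolutions

lemma diffQuot_mem (hU : PerturbedSolutions μ A P T s U) {h : ℂ} (hs : h ∈ s) :
    h⁻¹ • (U h - U 0) ∈ T :=
  T.smul_mem _ (T.sub_mem (hU.mem h hs) (hU.mem 0 hU.zero_mem))

lemma sesqForm_diffQuot (hU : PerturbedSolutions μ A P T s U)
    (hA : AEStronglyMeasurable A μ) (hAK : ∀ᵐ p ∂μ, ‖A p‖ ≤ K)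
    (hP : AEStronglyMeasurable P μ) (hPK : ∀ᵐ p ∂μ, ‖P p‖ ≤ Kp)
    {h : ℂ} (hs : h ∈ s) (hh : h ≠ 0) {g : β → ℂ} (hg : g ∈ T) :
    sesqForm μ (A + h • P) (h⁻¹ • (U h - U 0)) g = -sesqForm μ P (U 0) g := by
  have hU0 := hU.memLp _ (hU.mem 0 hU.zero_mem)
  have hgL := hU.memLp g hg
  rw [sesqForm_smul_left, sesqForm_sub_left (hA.add (hP.const_smul h))
      (ae_norm_add_smul_le hAK hPK h) (hU.memLp _ (hU.mem h hs)) hU0 hgL,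
    hU.sesqForm_eq h hs g hg, sesqForm_add_smul_coef hA hAK hP hPK hU0 hgL]
  field_simp
  ring

lemma sesqForm_diffQuot_sub (hU : PerturbedSolutions μ A P T s U)
    (hA : AEStronglyMeasurable A μ) (hAK : ∀ᵐ p ∂μ, ‖A p‖ ≤ K)
    (hP : AEStronglyMeasurable P μ) (hPK : ∀ᵐ p ∂μ, ‖P p‖ ≤ Kp)
    {h h' : ℂ} (hs : h ∈ s) (hs' : h' ∈ s) (hh : h ≠ 0) (hh' : h' ≠ 0)
    {g : β → ℂ} (hg : g ∈ T) :
    sesqForm μ (A + h • P) (h⁻¹ • (U h - U 0) - h'⁻¹ • (U h' - U 0)) g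
      = -((h - h') * sesqForm μ P (h'⁻¹ • (U h' - U 0)) g) := by
  have hE := hU.memLp _ (hU.diffQuot_mem hs)
  have hE' := hU.memLp _ (hU.diffQuot_mem hs')
  have hgL := hU.memLp g hg
  have hcoef : A + h • P = (A + h' • P) + (h - h') • P := by
    rw [add_assoc, ← add_smul, add_sub_cancel]
  rw [sesqForm_sub_left (hA.add (hP.const_smul h)) (ae_norm_add_smul_le hAK hPK h) hE hE' hgL,
    hU.sesqForm_diffQuot hA hAK hP hPK hs hh hg, hcoef,
    sesqForm_add_smul_coef (hA.add (hP.const_smul h')) (ae_norm_add_smul_le hAK hPK h') hP hPK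
      hE' hgL, hU.sesqForm_diffQuot hA hAK hP hPK hs' hh' hg]
  ring

lemma norm_diffQuot_le (hU : PerturbedSolutions μ A P T s U)
    (hA : AEStronglyMeasurable A μ) (hAK : ∀ᵐ p ∂μ, ‖A p‖ ≤ K)
    (hP : AEStronglyMeasurable P μ) (hKp : 0 ≤ Kp) (hPK : ∀ᵐ p ∂μ, ‖P p‖ ≤ Kp)
    (hc : 0 < c) (hcoer : ∀ h ∈ s, ∀ᵐ p ∂μ, c ≤ ((A + h • P) p).re)
    {h : ℂ} (hs : h ∈ s) (hh : h ≠ 0) :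
    (eLpNorm (h⁻¹ • (U h - U 0)) 2 μ).toReal ≤ Kp * (eLpNorm (U 0) 2 μ).toReal / c := by
  have hE := hU.memLp _ (hU.diffQuot_mem hs)
  have hE_coer := mul_sq_le_re_sesqForm_self (hA.add (hP.const_smul h))
    (ae_norm_add_smul_le hAK hPK h) (hcoer h hs) hE
  rw [hU.sesqForm_diffQuot hA hAK hP hPK hs hh (hU.diffQuot_mem hs)] at hE_coer
  refine le_div_of_mul_sq_le_mul hc ENNReal.toReal_nonneg (by positivity)
    (hE_coer.trans ((re_neg_le_norm _).trans ?_))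
  calc _ ≤ Kp * ((eLpNorm (U 0) 2 μ).toReal * (eLpNorm (h⁻¹ • (U h - U 0)) 2 μ).toReal) :=
        norm_sesqForm_le hP hKp hPK (hU.memLp _ (hU.mem 0 hU.zero_mem)) hE
    _ = _ := by ring

lemma eLpNorm_diffQuot_sub_le (hU : PerturbedSolutions μ A P T s U)
    (hA : AEStronglyMeasurable A μ) (hAK : ∀ᵐ p ∂μ, ‖A p‖ ≤ K)
    (hP : AEStronglyMeasurable P μ) (hKp : 0 ≤ Kp) (hPK : ∀ᵐ p ∂μ, ‖P p‖ ≤ Kp)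
    (hc : 0 < c) (hcoer : ∀ h ∈ s, ∀ᵐ p ∂μ, c ≤ ((A + h • P) p).re)
    {h h' : ℂ} (hs : h ∈ s) (hs' : h' ∈ s) (hh : h ≠ 0) (hh' : h' ≠ 0) :
    eLpNorm (h⁻¹ • (U h - U 0) - h'⁻¹ • (U h' - U 0)) 2 μ
      ≤ ENNReal.ofReal (Kp * (Kp * (eLpNorm (U 0) 2 μ).toReal / c) / c * ‖h - h'‖) := by
  have hg := T.sub_mem (hU.diffQuot_mem hs) (hU.diffQuot_mem hs')
  have hg_coer := mul_sq_le_re_sesqForm_self (hA.add (hP.const_smul h))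
    (ae_norm_add_smul_le hAK hPK h) (hcoer h hs) (hU.memLp _ hg)
  rw [hU.sesqForm_diffQuot_sub hA hAK hP hPK hs hs' hh hh' hg] at hg_coer
  rw [ENNReal.le_ofReal_iff_toReal_le (hU.memLp _ hg).eLpNorm_ne_top (by positivity),
    mul_comm _ ‖h - h'‖, ← mul_div_assoc]
  refine le_div_of_mul_sq_le_mul hc ENNReal.toReal_nonneg (by positivity)
    (hg_coer.trans ((re_neg_le_norm _).trans ?_))
  rw [norm_mul, mul_assoc, mul_assoc]
  gcongr
  refine (norm_sesqForm_le hP hKp hPK (hU.memLp _ (hU.diffQuot_mem hs')) (hU.memLp _ hg)).trans ?_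
  gcongr
  exact hU.norm_diffQuot_le hA hAK hP hKp hPK hc hcoer hs' hh'

end PerturbedSolutions

end DifferenceQuotient

section EnergySpace

variable {d : ℕ} {Ω : Set (Eu d)} {γ₁ : ℝ → ℝ} {δ : ℝ}

def pairMeasure (d : ℕ) (Ω : Set (Eu d)) (δ : ℝ) : Measure (Eu d × Eu d) :=
  (volume.restrict (NLdom d Ω δ)).prod (volume.restrict (NLdom d Ω δ))

lemma pairMeasure_eq :
    pairMeasure d Ω δ = volume.restrict (NLdom d Ω δ ×ˢ NLdom d Ω δ) := by
  rw [pairMeasure, Measure.prod_restrict, Measure.volume_eq_prod]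

/-- Chosen so that `|v|²_{S_δ(Ω;ℂ)}` is the squared `L²(pairMeasure)` norm of `nonlocalGrad v`. -/
def nonlocalGrad (d : ℕ) (γ₁ : ℝ → ℝ) (δ : ℝ) : (Eu d → ℂ) →ₗ[ℂ] (Eu d × Eu d → ℂ) where
  toFun v p := (Real.sqrt (NLker d γ₁ δ (dist p.2 p.1)) : ℂ) * (v p.2 - v p.1)
  map_add' v w := by
    ext p
    simp only [Pi.add_apply]
    ring
  map_smul' a v := by
    ext p
    simp only [Pi.smul_apply, smul_eq_mul, RingHom.id_apply]
    ring

lemma nonlocalGrad_apply (v : Eu d → ℂ) (p : Eu d × Eu d) :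
    nonlocalGrad d γ₁ δ v p = (Real.sqrt (NLker d γ₁ δ (dist p.2 p.1)) : ℂ) * (v p.2 - v p.1) :=
  rfl

/-- The space `S_δ(Ω;ℂ)` of `NLMemSC`, as a submodule (see `mem_energySpace_iff`). -/
def energySpace (d : ℕ) (Ω : Set (Eu d)) (γ₁ : ℝ → ℝ) (δ : ℝ) : Submodule ℂ (Eu d → ℂ) where
  carrier := {v | MemLp v 2 (volume.restrict (NLdom d Ω δ)) ∧
    MemLp (nonlocalGrad d γ₁ δ v) 2 (pairMeasure d Ω δ) ∧
    ∀ᵐ x ∂(volume.restrict (NLcollar d Ω δ)), v x = 0}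
  zero_mem' := ⟨MemLp.zero, by simp, ae_of_all _ fun _ => rfl⟩
  add_mem' := by
    rintro v w ⟨hv, hDv, hv0⟩ ⟨hw, hDw, hw0⟩
    refine ⟨hv.add hw, by simpa only [map_add] using hDv.add hDw, ?_⟩
    filter_upwards [hv0, hw0] with x hvx hwx
    simp [hvx, hwx]
  smul_mem' := by
    rintro a v ⟨hv, hDv, hv0⟩
    refine ⟨hv.const_smul a, by simpa only [map_smul] using hDv.const_smul a, ?_⟩
    filter_upwards [hv0] with x hvx
    simp [hvx]

lemma NLker_nonneg (hγ0 : ∀ r, 0 ≤ γ₁ r) (hδ : 0 < δ) (r : ℝ) : 0 ≤ NLker d γ₁ δ r :=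
  mul_nonneg (inv_nonneg.mpr (pow_nonneg hδ.le _)) (hγ0 _)

lemma measurable_NLker_dist (hγmono : AntitoneOn γ₁ (Ici 0)) (hδ : 0 < δ) :
    Measurable fun p : Eu d × Eu d => NLker d γ₁ δ (dist p.2 p.1) := by
  have hanti : Antitone fun t => γ₁ (max t 0) := fun a b hab =>
    hγmono (le_max_right a 0) (le_max_right b 0) (max_le_max hab le_rfl)
  have heq : (fun p : Eu d × Eu d => NLker d γ₁ δ (dist p.2 p.1))
      = fun p => (δ ^ (d + 2))⁻¹ * γ₁ (max (dist p.2 p.1 / δ) 0) := by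
    ext p
    rw [NLker, max_eq_left (div_nonneg dist_nonneg hδ.le)]
  rw [heq]
  exact (hanti.measurable.comp ((measurable_snd.dist measurable_fst).div_const δ)).const_mul _

lemma norm_nonlocalGrad_sq (hγ0 : ∀ r, 0 ≤ γ₁ r) (hδ : 0 < δ) (v : Eu d → ℂ)
    (p : Eu d × Eu d) :
    ‖nonlocalGrad d γ₁ δ v p‖ ^ 2 = NLker d γ₁ δ (dist p.2 p.1) * ‖v p.2 - v p.1‖ ^ 2 := by
  rw [nonlocalGrad_apply, norm_mul, mul_pow, Complex.norm_real, Real.norm_eq_abs, sq_abs,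
    Real.sq_sqrt (NLker_nonneg hγ0 hδ _)]

lemma aestronglyMeasurable_nonlocalGrad (hγmono : AntitoneOn γ₁ (Ici 0)) (hδ : 0 < δ)
    {v : Eu d → ℂ} (hv : AEStronglyMeasurable v (volume.restrict (NLdom d Ω δ))) :
    AEStronglyMeasurable (nonlocalGrad d γ₁ δ v) (pairMeasure d Ω δ) :=
  (Complex.measurable_ofReal.comp (measurable_NLker_dist hγmono hδ).sqrt).aestronglyMeasurable.mul
    (hv.comp_snd.sub hv.comp_fst)

lemma memLp_nonlocalGrad_iff (hγ0 : ∀ r, 0 ≤ γ₁ r) (hγmono : AntitoneOn γ₁ (Ici 0))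
    (hδ : 0 < δ) {v : Eu d → ℂ} (hv : AEStronglyMeasurable v (volume.restrict (NLdom d Ω δ))) :
    MemLp (nonlocalGrad d γ₁ δ v) 2 (pairMeasure d Ω δ) ↔ IntegrableOn
      (fun p : Eu d × Eu d => NLker d γ₁ δ (dist p.2 p.1) * ‖v p.2 - v p.1‖ ^ 2)
      (NLdom d Ω δ ×ˢ NLdom d Ω δ) := by
  rw [memLp_two_iff_integrable_sq_norm (aestronglyMeasurable_nonlocalGrad hγmono hδ hv),
    IntegrableOn, ← pairMeasure_eq]
  simp_rw [norm_nonlocalGrad_sq hγ0 hδ]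

lemma mem_energySpace_iff (hγ0 : ∀ r, 0 ≤ γ₁ r) (hγmono : AntitoneOn γ₁ (Ici 0))
    (hδ : 0 < δ) {v : Eu d → ℂ} : v ∈ energySpace d Ω γ₁ δ ↔ NLMemSC d Ω γ₁ δ v := by
  refine and_congr_right fun hv => and_congr_left fun _ => ?_
  exact memLp_nonlocalGrad_iff hγ0 hγmono hδ hv.1

lemma sqrt_NLenergySqC (hγ0 : ∀ r, 0 ≤ γ₁ r) (hγmono : AntitoneOn γ₁ (Ici 0)) (hδ : 0 < δ)
    {v : Eu d → ℂ} (hv : v ∈ energySpace d Ω γ₁ δ) :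
    Real.sqrt (NLenergySqC d Ω γ₁ δ v)
      = (eLpNorm (nonlocalGrad d γ₁ δ v) 2 (pairMeasure d Ω δ)).toReal := by
  have hint := (memLp_nonlocalGrad_iff hγ0 hγmono hδ hv.1.1).mp hv.2.1
  rw [IntegrableOn, ← pairMeasure_eq, pairMeasure] at hint
  rw [NLenergySqC, integral_integral hint, ← pairMeasure, ← Real.sqrt_sq ENNReal.toReal_nonneg,
    sq_toReal_eLpNorm_two hv.2.1]
  simp_rw [norm_nonlocalGrad_sq hγ0 hδ]

lemma NLTformC_eq_sesqForm (hγ0 : ∀ r, 0 ≤ γ₁ r) (hδ : 0 < δ) {B : Eu d → Eu d → ℂ}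
    (hB : AEStronglyMeasurable (fun p : Eu d × Eu d => B p.1 p.2) (pairMeasure d Ω δ))
    {K : ℝ} (hK : ∀ᵐ p ∂(pairMeasure d Ω δ), ‖B p.1 p.2‖ ≤ K) {v w : Eu d → ℂ}
    (hv : v ∈ energySpace d Ω γ₁ δ) (hw : w ∈ energySpace d Ω γ₁ δ) :
    NLTformC d Ω γ₁ δ B v w = sesqForm (pairMeasure d Ω δ) (fun p => B p.1 p.2)
      (nonlocalGrad d γ₁ δ v) (nonlocalGrad d γ₁ δ w) := by
  have hpt : ∀ p : Eu d × Eu d, B p.1 p.2 * (NLker d γ₁ δ (dist p.1 p.2) : ℂ)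
      * (v p.2 - v p.1) * conj (w p.2 - w p.1)
      = B p.1 p.2 * (nonlocalGrad d γ₁ δ v p * conj (nonlocalGrad d γ₁ δ w p)) := fun p => by
    have hk : (Real.sqrt (NLker d γ₁ δ (dist p.2 p.1)) : ℂ) ^ 2 = NLker d γ₁ δ (dist p.1 p.2) := by
      rw [← Complex.ofReal_pow, Real.sq_sqrt (NLker_nonneg hγ0 hδ _), dist_comm]
    simp only [nonlocalGrad_apply, map_mul, Complex.conj_ofReal, ← hk]
    ring
  have hint := integrable_sesqForm hB hK hv.2.1 hw.2.1
  rw [← integrable_congr (ae_of_all _ fun p => hpt p), pairMeasure] at hint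
  rw [NLTformC, integral_integral hint, sesqForm, pairMeasure]
  exact integral_congr_ae (ae_of_all _ hpt)

end EnergySpace

section Poincare

variable {d : ℕ} {Ω : Set (Eu d)} {γ₁ : ℝ → ℝ} {δ : ℝ}

lemma exists_mem_frontier_dist_le {E : Type*} [NormedAddCommGroup E] [NormedSpace ℝ E]
    {s : Set E} {x y : E} (hx : x ∈ s) (hy : y ∉ s) :
    ∃ z ∈ frontier s, dist z y ≤ dist x y := by
  set B := closedBall y (dist x y)
  have : PreconnectedSpace B :=
    isPreconnected_iff_preconnectedSpace.mp (convex_closedBall _ _).isPreconnected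
  have hne : (((↑) : B → E) ⁻¹' s).Nonempty := ⟨⟨x, mem_closedBall.mpr le_rfl⟩, hx⟩
  have hnu : ((↑) : B → E) ⁻¹' s ≠ univ := fun h =>
    hy (h.symm.subset (mem_univ (⟨y, mem_closedBall_self dist_nonneg⟩ : B)))
  obtain ⟨⟨z, hz⟩, hzs⟩ := nonempty_frontier_iff.mpr ⟨hne, hnu⟩
  exact ⟨z, continuous_subtype_val.frontier_preimage_subset s hzs, mem_closedBall.mp hz⟩

lemma mem_NLdom_of_dist_lt {x y : Eu d} (hx : x ∈ Ω) (hxy : dist y x < δ) :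
    y ∈ NLdom d Ω δ := by
  by_cases hy : y ∈ Ω
  · exact Or.inl hy
  obtain ⟨z, hz, hzy⟩ := exists_mem_frontier_dist_le hx hy
  refine Or.inr ⟨hy, (infDist_le_dist_of_mem hz).trans_lt ?_⟩
  rw [dist_comm]
  exact hzy.trans_lt (by rwa [dist_comm])

lemma exists_pos_of_integral_eq (hd : 1 ≤ d) (hγ0 : ∀ r, 0 ≤ γ₁ r)
    (hγnorm : (∫ z in ball (0 : Eu d) 1, γ₁ ‖z‖ * ‖z‖ ^ 2) = (d : ℝ)) :
    ∃ r, 0 < r ∧ r < 1 ∧ 0 < γ₁ r := by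
  by_contra! h
  have hzero : (∫ z in ball (0 : Eu d) 1, γ₁ ‖z‖ * ‖z‖ ^ 2) = 0 := by
    refine setIntegral_eq_zero_of_forall_eq_zero fun z hz => ?_
    rcases (norm_nonneg z).eq_or_lt with h0 | h0
    · simp [← h0]
    · rw [le_antisymm (h _ h0 (by simpa using hz)) (hγ0 _), zero_mul]
  have hd' : (1 : ℝ) ≤ d := by exact_mod_cast hd
  linarith

lemma exists_NLker_lower_bound (hd : 1 ≤ d) (hγ0 : ∀ r, 0 ≤ γ₁ r)
    (hγmono : AntitoneOn γ₁ (Ici 0))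
    (hγnorm : (∫ z in ball (0 : Eu d) 1, γ₁ ‖z‖ * ‖z‖ ^ 2) = (d : ℝ)) (hδ : 0 < δ) :
    ∃ η c₀ : ℝ, 0 < η ∧ η ≤ δ ∧ 0 < c₀ ∧ ∀ r, 0 ≤ r → r < η → c₀ ≤ NLker d γ₁ δ r := by
  obtain ⟨r₀, hr₀, hr₀1, hγr₀⟩ := exists_pos_of_integral_eq hd hγ0 hγnorm
  refine ⟨r₀ * δ, (δ ^ (d + 2))⁻¹ * γ₁ r₀, by positivity, by nlinarith, by positivity,
    fun r hr hrη => ?_⟩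
  refine mul_le_mul_of_nonneg_left (hγmono (div_nonneg hr hδ.le) hr₀.le ?_) (by positivity)
  rw [div_le_iff₀ hδ]
  exact hrη.le

lemma enorm_nonlocalGrad_sq (hγ0 : ∀ r, 0 ≤ γ₁ r) (hδ : 0 < δ) (v : Eu d → ℂ)
    (p : Eu d × Eu d) :
    ‖nonlocalGrad d γ₁ δ v p‖ₑ ^ 2
      = ENNReal.ofReal (NLker d γ₁ δ (dist p.2 p.1)) * ‖v p.2 - v p.1‖ₑ ^ 2 := by
  simp only [← ofReal_norm, ← ENNReal.ofReal_pow (norm_nonneg _), norm_nonlocalGrad_sq hγ0 hδ,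
    ENNReal.ofReal_mul (NLker_nonneg hγ0 hδ _)]

lemma lintegral_lintegral_nonlocalGrad (hγmono : AntitoneOn γ₁ (Ici 0)) (hδ : 0 < δ)
    {v : Eu d → ℂ} (hv : AEStronglyMeasurable v (volume.restrict (NLdom d Ω δ))) :
    ∫⁻ x in NLdom d Ω δ, ∫⁻ y in NLdom d Ω δ, ‖nonlocalGrad d γ₁ δ v (x, y)‖ₑ ^ 2
      = ∫⁻ p, ‖nonlocalGrad d γ₁ δ v p‖ₑ ^ 2 ∂(pairMeasure d Ω δ) :=
  (lintegral_prod _ ((aestronglyMeasurable_nonlocalGrad hγmono hδ hv).enorm.pow_const 2)).symm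

def slab (Ω : Set (Eu d)) (e : Eu d) (t : ℝ) : Set (Eu d) := Ω ∩ {x | t < inner ℝ e x}

lemma measurableSet_slab (hΩ : MeasurableSet Ω) (e : Eu d) (t : ℝ) :
    MeasurableSet (slab Ω e t) :=
  hΩ.inter (measurableSet_lt measurable_const (continuous_const.inner continuous_id).measurable)

lemma dist_lt_and_inner_lt_of_mem_ball {E : Type*} [NormedAddCommGroup E]
    [InnerProductSpace ℝ E] {e x y : E} (he : ‖e‖ = 1) {η : ℝ}
    (hy : y ∈ ball (x + (2 * η / 3) • e) (η / 3)) :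
    dist y x < η ∧ inner ℝ e x + η / 3 < inner ℝ e y := by
  have hyc : ‖y - (x + (2 * η / 3) • e)‖ < η / 3 := mem_ball_iff_norm.mp hy
  have hη : 0 < η := by linarith [norm_nonneg (y - (x + (2 * η / 3) • e))]
  constructor
  · calc dist y x = ‖(y - (x + (2 * η / 3) • e)) + (2 * η / 3) • e‖ := by
          rw [dist_eq_norm]; congr 1; abel
      _ ≤ ‖y - (x + (2 * η / 3) • e)‖ + 2 * η / 3 := by
          refine (norm_add_le _ _).trans_eq ?_
          rw [norm_smul, he, mul_one, Real.norm_of_nonneg (by positivity)]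
      _ < η := by linarith
  · have hinner : inner ℝ e y = inner ℝ e x + 2 * η / 3 + inner ℝ e (y - (x + (2 * η / 3) • e)) := by
      rw [inner_sub_right, inner_add_right, inner_smul_right, real_inner_self_eq_norm_sq, he]
      ring
    have hcs := (abs_le.mp ((abs_real_inner_le_norm e (y - (x + (2 * η / 3) • e))).trans_eq
      (by rw [he, one_mul]))).1
    linarith

lemma enorm_sq_le_two_mul {E : Type*} [SeminormedAddCommGroup E] (a b : E) : ‖a‖ₑ ^ 2 ≤ 2 * ‖b - a‖ₑ ^ 2 + 2 * ‖b‖ₑ ^ 2 := by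
  simp only [← ofReal_norm, ← ENNReal.ofReal_pow (norm_nonneg _)]
  rw [← ENNReal.ofReal_ofNat, ← ENNReal.ofReal_mul zero_le_two, ← ENNReal.ofReal_mul zero_le_two,
    ← ENNReal.ofReal_add (by positivity) (by positivity)]
  refine ENNReal.ofReal_le_ofReal ?_
  have htri := norm_sub_le b (b - a)
  rw [sub_sub_cancel] at htri
  nlinarith [mul_self_le_mul_self (norm_nonneg a) htri, sq_nonneg (‖b‖ - ‖b - a‖)]

lemma volume_mul_enorm_sq_le (hγ0 : ∀ r, 0 ≤ γ₁ r) (hδ : 0 < δ) {v : Eu d → ℂ}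
    (hv : AEStronglyMeasurable v (volume.restrict (NLdom d Ω δ))) {x : Eu d} {S : Set (Eu d)}
    (hS : MeasurableSet S) (hSD : S ⊆ NLdom d Ω δ) {c₀ : ℝ} (hc₀ : 0 < c₀)
    (hker : ∀ y ∈ S, c₀ ≤ NLker d γ₁ δ (dist y x)) :
    volume S * ‖v x‖ₑ ^ 2
      ≤ 2 * (ENNReal.ofReal c₀)⁻¹ * (∫⁻ y in NLdom d Ω δ, ‖nonlocalGrad d γ₁ δ v (x, y)‖ₑ ^ 2)
        + 2 * ∫⁻ y in S, ‖v y‖ₑ ^ 2 := by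
  have hc : ENNReal.ofReal c₀ ≠ 0 := (ENNReal.ofReal_pos.mpr hc₀).ne'
  have hpt : ∀ y ∈ S, ‖v x‖ₑ ^ 2
      ≤ 2 * (ENNReal.ofReal c₀)⁻¹ * ‖nonlocalGrad d γ₁ δ v (x, y)‖ₑ ^ 2 + 2 * ‖v y‖ₑ ^ 2 := by
    intro y hy
    refine (enorm_sq_le_two_mul (v x) (v y)).trans ?_
    rw [mul_assoc, enorm_nonlocalGrad_sq hγ0 hδ]
    gcongr
    calc ‖v y - v x‖ₑ ^ 2
        = (ENNReal.ofReal c₀)⁻¹ * (ENNReal.ofReal c₀ * ‖v y - v x‖ₑ ^ 2) :=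
          (ENNReal.inv_mul_cancel_left hc ENNReal.ofReal_ne_top).symm
      _ ≤ _ := by gcongr; exact hker y hy
  have hvS : AEMeasurable (fun y => 2 * ‖v y‖ₑ ^ 2) (volume.restrict S) :=
    ((hv.mono_measure (Measure.restrict_mono hSD le_rfl)).enorm.pow_const 2).const_mul 2
  calc volume S * ‖v x‖ₑ ^ 2 = ∫⁻ _ in S, ‖v x‖ₑ ^ 2 := by rw [setLIntegral_const, mul_comm]
    _ ≤ ∫⁻ y in S, (2 * (ENNReal.ofReal c₀)⁻¹ * ‖nonlocalGrad d γ₁ δ v (x, y)‖ₑ ^ 2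
          + 2 * ‖v y‖ₑ ^ 2) := setLIntegral_mono' hS hpt
    _ ≤ _ := by
        rw [lintegral_add_right' _ hvS, lintegral_const_mul' _ _ (by finiteness),
          lintegral_const_mul' _ _ (by finiteness)]
        gcongr

lemma lintegral_union_NLcollar_le {v : Eu d → ℂ}
    (hv0 : ∀ᵐ x ∂(volume.restrict (NLcollar d Ω δ)), v x = 0) (s : Set (Eu d)) :
    ∫⁻ x in s ∪ NLcollar d Ω δ, ‖v x‖ₑ ^ 2 ≤ ∫⁻ x in s, ‖v x‖ₑ ^ 2 := by
  have hΓ : ∫⁻ x in NLcollar d Ω δ, ‖v x‖ₑ ^ 2 = 0 :=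
    (lintegral_congr_ae (hv0.mono fun x hx => by simp [hx])).trans lintegral_zero
  exact (lintegral_union_le _ _ _).trans_eq (by rw [hΓ, add_zero])

lemma lintegral_ball_le_lintegral_slab {v : Eu d → ℂ}
    (hv0 : ∀ᵐ x ∂(volume.restrict (NLcollar d Ω δ)), v x = 0) {e x : Eu d} (he : ‖e‖ = 1)
    {η t : ℝ} (hηδ : η ≤ δ) (hx : x ∈ slab Ω e (t - η / 3)) :
    ∫⁻ y in ball (x + (2 * η / 3) • e) (η / 3), ‖v y‖ₑ ^ 2 ≤ ∫⁻ y in slab Ω e t, ‖v y‖ₑ ^ 2 := by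
  have hsub : ball (x + (2 * η / 3) • e) (η / 3) ⊆ slab Ω e t ∪ NLcollar d Ω δ := by
    intro y hy
    obtain ⟨hyx, hinner⟩ := dist_lt_and_inner_lt_of_mem_ball he hy
    rcases mem_NLdom_of_dist_lt hx.1 (hyx.trans_le hηδ) with hyΩ | hyΓ
    · have hxt : t - η / 3 < inner ℝ e x := hx.2
      exact Or.inl ⟨hyΩ, show t < inner ℝ e y by linarith⟩
    · exact Or.inr hyΓ
  exact (lintegral_mono_set hsub).trans (lintegral_union_NLcollar_le hv0 _)

/-- For `x` in the lower slab, the ball of radius `η / 3` around `x + (2η/3) • e` lies within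
distance `η` of `x`, where `γ_δ ≥ c₀`, and inside the upper slab or the collar, where `v = 0`. -/
lemma volume_ball_mul_lintegral_slab_le (hΩ : MeasurableSet Ω) (hγ0 : ∀ r, 0 ≤ γ₁ r)
    (hγmono : AntitoneOn γ₁ (Ici 0)) (hδ : 0 < δ) {e : Eu d} (he : ‖e‖ = 1) {η c₀ : ℝ}
    (hηδ : η ≤ δ) (hc₀ : 0 < c₀) (hker : ∀ r, 0 ≤ r → r < η → c₀ ≤ NLker d γ₁ δ r)
    {v : Eu d → ℂ} (hv : AEStronglyMeasurable v (volume.restrict (NLdom d Ω δ)))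
    (hv0 : ∀ᵐ x ∂(volume.restrict (NLcollar d Ω δ)), v x = 0) (t : ℝ) :
    volume (ball (0 : Eu d) (η / 3)) * ∫⁻ x in slab Ω e (t - η / 3), ‖v x‖ₑ ^ 2
      ≤ 2 * (ENNReal.ofReal c₀)⁻¹ * (∫⁻ p, ‖nonlocalGrad d γ₁ δ v p‖ₑ ^ 2 ∂(pairMeasure d Ω δ))
        + 2 * volume Ω * ∫⁻ x in slab Ω e t, ‖v x‖ₑ ^ 2 := by
  set I := ∫⁻ x in slab Ω e t, ‖v x‖ₑ ^ 2
  have hc : (2 * (ENNReal.ofReal c₀)⁻¹) ≠ ⊤ := by finiteness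
  have hpt : ∀ x ∈ slab Ω e (t - η / 3), volume (ball (0 : Eu d) (η / 3)) * ‖v x‖ₑ ^ 2
      ≤ 2 * (ENNReal.ofReal c₀)⁻¹ * (∫⁻ y in NLdom d Ω δ, ‖nonlocalGrad d γ₁ δ v (x, y)‖ₑ ^ 2)
        + 2 * I := by
    intro x hx
    have hS := fun y (hy : y ∈ ball (x + (2 * η / 3) • e) (η / 3)) =>
      (dist_lt_and_inner_lt_of_mem_ball he hy).1
    rw [← Measure.addHaar_ball_center volume (x + (2 * η / 3) • e)]
    refine (volume_mul_enorm_sq_le hγ0 hδ hv measurableSet_ball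
      (fun y hy => mem_NLdom_of_dist_lt hx.1 ((hS y hy).trans_le hηδ)) hc₀
      fun y hy => hker _ dist_nonneg (hS y hy)).trans ?_
    gcongr
    exact lintegral_ball_le_lintegral_slab hv0 he hηδ hx
  calc _ = ∫⁻ x in slab Ω e (t - η / 3), volume (ball (0 : Eu d) (η / 3)) * ‖v x‖ₑ ^ 2 :=
        (lintegral_const_mul' _ _ measure_ball_lt_top.ne).symm
    _ ≤ ∫⁻ x in slab Ω e (t - η / 3), (2 * (ENNReal.ofReal c₀)⁻¹
          * (∫⁻ y in NLdom d Ω δ, ‖nonlocalGrad d γ₁ δ v (x, y)‖ₑ ^ 2) + 2 * I) :=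
        setLIntegral_mono' (measurableSet_slab hΩ e _) hpt
    _ ≤ 2 * (ENNReal.ofReal c₀)⁻¹
          * (∫⁻ x in NLdom d Ω δ, ∫⁻ y in NLdom d Ω δ, ‖nonlocalGrad d γ₁ δ v (x, y)‖ₑ ^ 2)
          + 2 * I * volume Ω := by
        rw [lintegral_add_right' _ aemeasurable_const, lintegral_const_mul' _ _ hc,
          setLIntegral_const]
        gcongr
        · exact fun x hx => Or.inl hx.1
        · exact inter_subset_left
    _ = _ := by rw [lintegral_lintegral_nonlocalGrad hγmono hδ hv]; ring

lemma exists_lintegral_slab_le (hΩ : MeasurableSet Ω) (hΩfin : volume Ω ≠ ⊤)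
    (hγ0 : ∀ r, 0 ≤ γ₁ r) (hγmono : AntitoneOn γ₁ (Ici 0)) (hδ : 0 < δ) {e : Eu d}
    (he : ‖e‖ = 1) {η c₀ : ℝ} (hη : 0 < η) (hηδ : η ≤ δ) (hc₀ : 0 < c₀)
    (hker : ∀ r, 0 ≤ r → r < η → c₀ ≤ NLker d γ₁ δ r) {R : ℝ} (hR : ∀ x ∈ Ω, ‖x‖ ≤ R)
    (k : ℕ) :
    ∃ C : ℝ≥0∞, C ≠ ⊤ ∧ ∀ v : Eu d → ℂ, AEStronglyMeasurable v (volume.restrict (NLdom d Ω δ)) →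
      (∀ᵐ x ∂(volume.restrict (NLcollar d Ω δ)), v x = 0) →
      ∫⁻ x in slab Ω e (R - k * (η / 3)), ‖v x‖ₑ ^ 2
        ≤ C * ∫⁻ p, ‖nonlocalGrad d γ₁ δ v p‖ₑ ^ 2 ∂(pairMeasure d Ω δ) := by
  induction k with
  | zero =>
    have hempty : slab Ω e (R - (0 : ℕ) * (η / 3)) = ∅ := by
      refine eq_empty_of_forall_notMem fun x hx => ?_
      have hinner := real_inner_le_norm e x
      rw [he, one_mul] at hinner
      have hxR : R - (0 : ℕ) * (η / 3) < inner ℝ e x := hx.2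
      simp only [Nat.cast_zero, zero_mul, sub_zero] at hxR
      linarith [hR x hx.1]
    exact ⟨0, ENNReal.zero_ne_top, fun v _ _ => by rw [hempty, Measure.restrict_empty]; simp⟩
  | succ k ih =>
    obtain ⟨C, hC, hCv⟩ := ih
    set ω := volume (ball (0 : Eu d) (η / 3))
    have hω : ω ≠ 0 := (measure_ball_pos volume 0 (by positivity)).ne'
    refine ⟨ω⁻¹ * (2 * (ENNReal.ofReal c₀)⁻¹ + 2 * volume Ω * C), by finiteness,
      fun v hv hv0 => ?_⟩
    have hstep := volume_ball_mul_lintegral_slab_le hΩ hγ0 hγmono hδ he hηδ hc₀ hker hv hv0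
      (R - k * (η / 3))
    rw [show R - k * (η / 3) - η / 3 = R - (k + 1 : ℕ) * (η / 3) by push_cast; ring] at hstep
    calc _ = ω⁻¹ * (ω * ∫⁻ x in slab Ω e (R - (k + 1 : ℕ) * (η / 3)), ‖v x‖ₑ ^ 2) :=
          (ENNReal.inv_mul_cancel_left hω measure_ball_lt_top.ne).symm
      _ ≤ ω⁻¹ * (2 * (ENNReal.ofReal c₀)⁻¹
            * (∫⁻ p, ‖nonlocalGrad d γ₁ δ v p‖ₑ ^ 2 ∂(pairMeasure d Ω δ))
            + 2 * volume Ω * (C * ∫⁻ p, ‖nonlocalGrad d γ₁ δ v p‖ₑ ^ 2 ∂(pairMeasure d Ω δ))) := by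
          gcongr
          exact hstep.trans (by gcongr; exact hCv v hv hv0)
      _ = _ := by ring

lemma eLpNorm_two_eq_lintegral {α E : Type*} [MeasurableSpace α] {μ : Measure α}
    [NormedAddCommGroup E] (f : α → E) :
    eLpNorm f 2 μ = (∫⁻ a, ‖f a‖ₑ ^ 2 ∂μ) ^ (1 / 2 : ℝ) := by
  rw [eLpNorm_eq_lintegral_rpow_enorm_toReal two_ne_zero ENNReal.ofNat_ne_top]
  norm_num

theorem exists_eLpNorm_le_eLpNorm_nonlocalGrad (hd : 1 ≤ d) (hΩo : IsOpen Ω)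
    (hΩb : Bornology.IsBounded Ω) (hγ0 : ∀ r, 0 ≤ γ₁ r) (hγmono : AntitoneOn γ₁ (Ici 0))
    (hγnorm : (∫ z in ball (0 : Eu d) 1, γ₁ ‖z‖ * ‖z‖ ^ 2) = (d : ℝ)) (hδ : 0 < δ) :
    ∃ C : ℝ≥0∞, C ≠ ⊤ ∧ ∀ v ∈ energySpace d Ω γ₁ δ, eLpNorm v 2 (volume.restrict (NLdom d Ω δ))
      ≤ C * eLpNorm (nonlocalGrad d γ₁ δ v) 2 (pairMeasure d Ω δ) := by
  obtain ⟨η, c₀, hη, hηδ, hc₀, hker⟩ := exists_NLker_lower_bound hd hγ0 hγmono hγnorm hδ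
  have : Nonempty (Fin d) := ⟨⟨0, hd⟩⟩
  obtain ⟨e, he⟩ := exists_norm_eq (Eu d) zero_le_one
  obtain ⟨R, hR⟩ := isBounded_iff_forall_norm_le.mp hΩb
  obtain ⟨k, hk⟩ := exists_nat_gt (2 * R / (η / 3))
  obtain ⟨C, hC, hCv⟩ := exists_lintegral_slab_le hΩo.measurableSet hΩb.measure_lt_top.ne
    hγ0 hγmono hδ he hη hηδ hc₀ hker hR k
  refine ⟨C ^ (1 / 2 : ℝ), by finiteness, fun v hv => ?_⟩
  have hΩslab : Ω ⊆ slab Ω e (R - k * (η / 3)) := fun x hx => by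
    refine ⟨hx, ?_⟩
    have hinner := abs_real_inner_le_norm e x
    rw [he, one_mul] at hinner
    have hxR := hR x hx
    rw [div_lt_iff₀ (by positivity)] at hk
    show R - k * (η / 3) < inner ℝ e x
    linarith [neg_abs_le (inner ℝ e x)]
  rw [eLpNorm_two_eq_lintegral, eLpNorm_two_eq_lintegral,
    ← ENNReal.mul_rpow_of_nonneg _ _ (by norm_num)]
  gcongr
  calc ∫⁻ x in NLdom d Ω δ, ‖v x‖ₑ ^ 2 ≤ ∫⁻ x in Ω, ‖v x‖ₑ ^ 2 :=
        lintegral_union_NLcollar_le hv.2.2 Ω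
    _ ≤ _ := (lintegral_mono_set hΩslab).trans (hCv v hv.1.1 hv.2.2)

end Poincare

section Completeness

lemma exists_memLp_tendsto_eLpNorm {α E : Type*} [MeasurableSpace α] {μ : Measure α}
    [NormedAddCommGroup E] [CompleteSpace E] {f : ℕ → α → E} (hf : ∀ n, MemLp (f n) 2 μ)
    (hcau : Tendsto (fun n : ℕ × ℕ => eLpNorm (f n.1 - f n.2) 2 μ) atTop (𝓝 0)) :
    ∃ g, MemLp g 2 μ ∧ Tendsto (fun n => eLpNorm (f n - g) 2 μ) atTop (𝓝 0) := by
  have hF : CauchySeq fun n => (hf n).toLp (f n) := by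
    rw [Lp.cauchySeq_Lp_iff_cauchySeq_eLpNorm]
    exact hcau.congr fun n =>
      eLpNorm_congr_ae ((hf n.1).coeFn_toLp.sub (hf n.2).coeFn_toLp).symm
  obtain ⟨G, hG⟩ := cauchySeq_tendsto_of_complete hF
  refine ⟨G, Lp.memLp G, ?_⟩
  rw [Lp.tendsto_Lp_iff_tendsto_eLpNorm'] at hG
  exact hG.congr fun n => eLpNorm_congr_ae ((hf n).coeFn_toLp.sub EventuallyEq.rfl)

variable {d : ℕ} {Ω : Set (Eu d)} {γ₁ : ℝ → ℝ} {δ : ℝ}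

lemma nonlocalGrad_ae_eq_of_tendsto {v : ℕ → Eu d → ℂ} {W : Eu d → ℂ}
    {G : Eu d × Eu d → ℂ}
    (hW : ∀ᵐ x ∂(volume.restrict (NLdom d Ω δ)), Tendsto (fun n => v n x) atTop (𝓝 (W x)))
    (hG : ∀ᵐ p ∂(pairMeasure d Ω δ),
      Tendsto (fun n => nonlocalGrad d γ₁ δ (v n) p) atTop (𝓝 (G p))) :
    G =ᵐ[pairMeasure d Ω δ] nonlocalGrad d γ₁ δ W := by
  filter_upwards [Measure.quasiMeasurePreserving_fst.ae hW,
    Measure.quasiMeasurePreserving_snd.ae hW, hG] with p h1 h2 hp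
  exact tendsto_nhds_unique hp ((h2.sub h1).const_mul _)

lemma ae_NLcollar_eq_zero_of_tendsto {v : ℕ → Eu d → ℂ} {W : Eu d → ℂ}
    (hW : ∀ᵐ x ∂(volume.restrict (NLdom d Ω δ)), Tendsto (fun n => v n x) atTop (𝓝 (W x)))
    (hv0 : ∀ n, ∀ᵐ x ∂(volume.restrict (NLcollar d Ω δ)), v n x = 0) :
    ∀ᵐ x ∂(volume.restrict (NLcollar d Ω δ)), W x = 0 := by
  filter_upwards [ae_restrict_of_ae_restrict_of_subset subset_union_right hW,
    ae_all_iff.mpr hv0] with x hx hx0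
  exact tendsto_nhds_unique (by simpa only [hx0] using hx) tendsto_const_nhds

theorem exists_tendsto_of_cauchy {C : ℝ≥0∞} (hC : C ≠ ⊤)
    (hP : ∀ v ∈ energySpace d Ω γ₁ δ, eLpNorm v 2 (volume.restrict (NLdom d Ω δ))
      ≤ C * eLpNorm (nonlocalGrad d γ₁ δ v) 2 (pairMeasure d Ω δ))
    {v : ℕ → Eu d → ℂ} (hv : ∀ n, v n ∈ energySpace d Ω γ₁ δ)
    (hcau : Tendsto (fun n : ℕ × ℕ => eLpNorm (nonlocalGrad d γ₁ δ (v n.1)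
      - nonlocalGrad d γ₁ δ (v n.2)) 2 (pairMeasure d Ω δ)) atTop (𝓝 0)) :
    ∃ w ∈ energySpace d Ω γ₁ δ, Tendsto (fun n => eLpNorm (nonlocalGrad d γ₁ δ (v n)
      - nonlocalGrad d γ₁ δ w) 2 (pairMeasure d Ω δ)) atTop (𝓝 0) := by
  obtain ⟨G, hGm, hG⟩ := exists_memLp_tendsto_eLpNorm (fun n => (hv n).2.1) hcau
  have hcauV : Tendsto (fun n : ℕ × ℕ => eLpNorm (v n.1 - v n.2) 2
      (volume.restrict (NLdom d Ω δ))) atTop (𝓝 0) := by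
    refine tendsto_of_tendsto_of_tendsto_of_le_of_le tendsto_const_nhds
      (by simpa using ENNReal.Tendsto.const_mul hcau (Or.inr hC)) (fun _ => zero_le)
      fun n => ?_
    simpa only [map_sub] using hP _ (sub_mem (hv n.1) (hv n.2))
  obtain ⟨W, hWm, hW⟩ := exists_memLp_tendsto_eLpNorm (fun n => (hv n).1) hcauV
  obtain ⟨ns, hns, hns_ae⟩ := (tendstoInMeasure_of_tendsto_eLpNorm two_ne_zero
    (fun n => (hv n).1.1) hWm.1 hW).exists_seq_tendsto_ae
  obtain ⟨ms, hms, hms_ae⟩ := (tendstoInMeasure_of_tendsto_eLpNorm two_ne_zero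
    (fun n => (hv (ns n)).2.1.1) hGm.1 (hG.comp hns.tendsto_atTop)).exists_seq_tendsto_ae
  have hW' := hns_ae.mono fun x hx => hx.comp hms.tendsto_atTop
  have hGW := nonlocalGrad_ae_eq_of_tendsto hW' hms_ae
  refine ⟨W, ⟨hWm, hGm.ae_eq hGW, ae_NLcollar_eq_zero_of_tendsto hW' fun k => (hv _).2.2⟩, ?_⟩
  exact hG.congr fun n => eLpNorm_congr_ae (EventuallyEq.rfl.sub hGW)

end Completeness

section Lipschitz

variable {d : ℕ} {Ω : Set (Eu d)} {γ₁ : ℝ → ℝ} {δ : ℝ}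

lemma eLpNorm_sub_le_add {α E : Type*} [MeasurableSpace α] {μ : Measure α}
    [NormedAddCommGroup E] {f g k : α → E}
    (hf : AEStronglyMeasurable f μ) (hg : AEStronglyMeasurable g μ)
    (hk : AEStronglyMeasurable k μ) :
    eLpNorm (f - k) 2 μ ≤ eLpNorm (f - g) 2 μ + eLpNorm (g - k) 2 μ := by
  simpa only [sub_add_sub_cancel] using eLpNorm_add_le (hf.sub hg) (hg.sub hk) one_le_two

theorem exists_tendsto_nhdsNE_of_lipschitz {C : ℝ≥0∞} (hC : C ≠ ⊤)
    (hP : ∀ v ∈ energySpace d Ω γ₁ δ, eLpNorm v 2 (volume.restrict (NLdom d Ω δ))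
      ≤ C * eLpNorm (nonlocalGrad d γ₁ δ v) 2 (pairMeasure d Ω δ))
    {q : ℂ → Eu d → ℂ} {s : Set ℂ} (hs : s ∈ 𝓝 (0 : ℂ))
    (hq : ∀ h ∈ s, h ≠ 0 → q h ∈ energySpace d Ω γ₁ δ) {L : ℝ}
    (hL : ∀ h ∈ s, ∀ h' ∈ s, h ≠ 0 → h' ≠ 0 →
      eLpNorm (nonlocalGrad d γ₁ δ (q h) - nonlocalGrad d γ₁ δ (q h')) 2 (pairMeasure d Ω δ)
        ≤ ENNReal.ofReal (L * ‖h - h'‖)) :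
    ∃ w ∈ energySpace d Ω γ₁ δ, Tendsto (fun h => eLpNorm (nonlocalGrad d γ₁ δ (q h)
      - nonlocalGrad d γ₁ δ w) 2 (pairMeasure d Ω δ)) (𝓝[≠] 0) (𝓝 0) := by
  have hev : ∀ᶠ h in 𝓝[≠] (0 : ℂ), h ∈ s ∧ h ≠ 0 :=
    inter_mem (mem_nhdsWithin_of_mem_nhds hs) self_mem_nhdsWithin
  have hbound : Tendsto (fun h : ℂ => ENNReal.ofReal (L * ‖h‖)) (𝓝 0) (𝓝 0) := by
    simpa using ENNReal.tendsto_ofReal ((continuous_const.mul continuous_norm).tendsto (0 : ℂ))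
  obtain ⟨u, hu⟩ := exists_seq_tendsto (𝓝[≠] (0 : ℂ))
  obtain ⟨N, hN⟩ := eventually_atTop.mp (hu.eventually hev)
  set h : ℕ → ℂ := fun n => u (n + N)
  have hh : ∀ n, h n ∈ s ∧ h n ≠ 0 := fun n => hN _ (Nat.le_add_left N n)
  have hh0 : Tendsto h atTop (𝓝 0) :=
    tendsto_nhds_of_tendsto_nhdsWithin (hu.comp (tendsto_add_atTop_nat N))
  have hcau : Tendsto (fun n : ℕ × ℕ => eLpNorm (nonlocalGrad d γ₁ δ (q (h n.1))
      - nonlocalGrad d γ₁ δ (q (h n.2))) 2 (pairMeasure d Ω δ)) atTop (𝓝 0) := by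
    have hdiff : Tendsto (fun n : ℕ × ℕ => h n.1 - h n.2) atTop (𝓝 0) := by
      rw [← prod_atTop_atTop_eq]
      simpa using (hh0.comp tendsto_fst).sub (hh0.comp tendsto_snd)
    exact tendsto_of_tendsto_of_tendsto_of_le_of_le tendsto_const_nhds (hbound.comp hdiff)
      (fun _ => zero_le) fun n => hL _ (hh n.1).1 _ (hh n.2).1 (hh n.1).2 (hh n.2).2
  obtain ⟨w, hw, hlim⟩ := exists_tendsto_of_cauchy hC hP (fun n => hq _ (hh n).1 (hh n).2) hcau
  refine ⟨w, hw, tendsto_of_tendsto_of_tendsto_of_le_of_le' tendsto_const_nhds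
    (hbound.mono_left nhdsWithin_le_nhds) (Eventually.of_forall fun _ => zero_le) ?_⟩
  filter_upwards [hev] with k ⟨hks, hk0⟩
  refine ge_of_tendsto (x := atTop) (f := fun n => ENNReal.ofReal (L * ‖k - h n‖) + eLpNorm
    (nonlocalGrad d γ₁ δ (q (h n)) - nonlocalGrad d γ₁ δ w) 2 (pairMeasure d Ω δ)) ?_
    (Eventually.of_forall fun n => ?_)
  · simpa using ((ENNReal.tendsto_ofReal ((continuous_const.mul
      (continuous_const.sub continuous_id).norm).tendsto (0 : ℂ))).comp hh0).add hlim
  · exact (eLpNorm_sub_le_add (hq k hks hk0).2.1.1 (hq _ (hh n).1 (hh n).2).2.1.1 hw.2.1.1).trans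
      (add_le_add_left (hL k hks _ (hh n).1 hk0 (hh n).2) _)

end Lipschitz

section ParametricProblem

lemma preimage_add_smul_mem_nhds_zero {E : Type*} [TopologicalSpace E] [AddCommGroup E]
    [Module ℂ E] [ContinuousAdd E] [ContinuousSMul ℂ E] {𝒜 : Set E} (h𝒜 : IsOpen 𝒜) {ξ : E}
    (hξ : ξ ∈ 𝒜) (e : E) : {h : ℂ | ξ + h • e ∈ 𝒜} ∈ 𝓝 (0 : ℂ) :=
  (continuous_const.add (continuous_id.smul continuous_const)).continuousAt.preimage_mem_nhds
    (by simpa using h𝒜.mem_nhds hξ)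

lemma diffQuot_eq_smul {α : Type*} (f g : α → ℂ) (h : ℂ) :
    (fun x => (f x - g x) / h) = h⁻¹ • (f - g) := by
  ext x
  simp [div_eq_inv_mul]

variable {d N : ℕ} {Abar : Eu d → Eu d → ℝ} {ψ : Fin N → Eu d → Eu d → ℝ}

lemma Acoef_add_smul_single (ξ : Fin N → ℂ) (i : Fin N) (h : ℂ) :
    (fun p : Eu d × Eu d => Acoef N Abar ψ ξ p.1 p.2) + h • (fun p => (ψ i p.1 p.2 : ℂ))
      = fun p => Acoef N Abar ψ (ξ + h • Pi.single i 1) p.1 p.2 := by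
  ext p
  simp only [Acoef, Pi.add_apply, Pi.smul_apply, smul_eq_mul, add_mul, Finset.sum_add_distrib,
    Pi.single_apply, mul_ite, mul_one, mul_zero, ite_mul, zero_mul, Finset.sum_ite_eq',
    Finset.mem_univ, if_true]
  ring

lemma measurable_Acoef (hAbar : Measurable fun p : Eu d × Eu d => Abar p.1 p.2)
    (hψ : ∀ i, Measurable fun p : Eu d × Eu d => ψ i p.1 p.2) (ξ : Fin N → ℂ) :
    Measurable fun p : Eu d × Eu d => Acoef N Abar ψ ξ p.1 p.2 :=
  (Complex.measurable_ofReal.comp hAbar).add (Finset.measurable_sum _ fun j _ =>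
    measurable_const.mul (Complex.measurable_ofReal.comp (hψ j)))

variable {Ω : Set (Eu d)} {γ₁ : ℝ → ℝ} {δ : ℝ}

lemma perturbedSolutions_of_forall_NLTformC_eq (hγ0 : ∀ r, 0 ≤ γ₁ r)
    (hγmono : AntitoneOn γ₁ (Ici 0)) (hδ : 0 < δ)
    (hAbar : Measurable fun p : Eu d × Eu d => Abar p.1 p.2)
    (hψ : ∀ i, Measurable fun p : Eu d × Eu d => ψ i p.1 p.2) {𝒜 : Set (Fin N → ℂ)} {K : ℝ}
    (hbdd : ∀ ξ ∈ 𝒜, ∀ᵐ p ∂(pairMeasure d Ω δ), ‖Acoef N Abar ψ ξ p.1 p.2‖ ≤ K)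
    {F : (Eu d → ℂ) → ℂ} {u : (Fin N → ℂ) → Eu d → ℂ}
    (hu : ∀ ξ ∈ 𝒜, NLMemSC d Ω γ₁ δ (u ξ) ∧ ∀ v : Eu d → ℂ, NLMemSC d Ω γ₁ δ v →
      NLTformC d Ω γ₁ δ (Acoef N Abar ψ ξ) (u ξ) v = F v)
    {ξ : Fin N → ℂ} (hξ : ξ ∈ 𝒜) (i : Fin N) :
    PerturbedSolutions (pairMeasure d Ω δ) (fun p => Acoef N Abar ψ ξ p.1 p.2)
      (fun p => (ψ i p.1 p.2 : ℂ)) ((energySpace d Ω γ₁ δ).map (nonlocalGrad d γ₁ δ))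
      {h | ξ + h • Pi.single i 1 ∈ 𝒜}
      (fun h => nonlocalGrad d γ₁ δ (u (ξ + h • Pi.single i 1))) where
  zero_mem := by simpa using hξ
  memLp := by
    rintro _ ⟨v, hv, rfl⟩
    exact hv.2.1
  mem h hh := ⟨_, (mem_energySpace_iff hγ0 hγmono hδ).mpr (hu _ hh).1, rfl⟩
  sesqForm_eq := by
    rintro h hh _ ⟨v, hv, rfl⟩
    have hsol : ∀ ζ ∈ 𝒜, sesqForm (pairMeasure d Ω δ) (fun p => Acoef N Abar ψ ζ p.1 p.2)
        (nonlocalGrad d γ₁ δ (u ζ)) (nonlocalGrad d γ₁ δ v) = F v := fun ζ hζ => by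
      rw [← NLTformC_eq_sesqForm hγ0 hδ (measurable_Acoef hAbar hψ ζ).aestronglyMeasurable
        (hbdd ζ hζ) ((mem_energySpace_iff hγ0 hγmono hδ).mpr (hu ζ hζ).1) hv]
      exact (hu ζ hζ).2 v ((mem_energySpace_iff hγ0 hγmono hδ).mp hv)
    simp only [zero_smul, add_zero]
    rw [Acoef_add_smul_single, hsol _ hh, hsol _ hξ]

lemma exists_lipschitz_diffQuot (hγ0 : ∀ r, 0 ≤ γ₁ r) (hγmono : AntitoneOn γ₁ (Ici 0))
    (hδ : 0 < δ) (hAbar : Measurable fun p : Eu d × Eu d => Abar p.1 p.2)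
    (hψ : ∀ i, Measurable fun p : Eu d × Eu d => ψ i p.1 p.2) {𝒜 : Set (Fin N → ℂ)}
    {rc Rc : ℝ} (hrc : 0 < rc) (hell : ∀ ξ ∈ 𝒜, ∀ᵐ p ∂(pairMeasure d Ω δ),
      rc / 2 < (Acoef N Abar ψ ξ p.1 p.2).re ∧ ‖Acoef N Abar ψ ξ p.1 p.2‖ < 2 * Rc)
    {i : Fin N} {K : ℝ} (hK : ∀ᵐ p ∂(pairMeasure d Ω δ), |ψ i p.1 p.2| ≤ K)
    {F : (Eu d → ℂ) → ℂ} {u : (Fin N → ℂ) → Eu d → ℂ}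
    (hu : ∀ ξ ∈ 𝒜, NLMemSC d Ω γ₁ δ (u ξ) ∧ ∀ v : Eu d → ℂ, NLMemSC d Ω γ₁ δ v →
      NLTformC d Ω γ₁ δ (Acoef N Abar ψ ξ) (u ξ) v = F v)
    {ξ : Fin N → ℂ} (hξ : ξ ∈ 𝒜) :
    ∃ L : ℝ, ∀ h ∈ {h : ℂ | ξ + h • Pi.single i 1 ∈ 𝒜}, ∀ h' ∈ {h : ℂ | ξ + h • Pi.single i 1 ∈ 𝒜},
      h ≠ 0 → h' ≠ 0 →
      eLpNorm (nonlocalGrad d γ₁ δ (fun x => (u (ξ + h • Pi.single i 1) x - u ξ x) / h)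
        - nonlocalGrad d γ₁ δ (fun x => (u (ξ + h' • Pi.single i 1) x - u ξ x) / h'))
        2 (pairMeasure d Ω δ) ≤ ENNReal.ofReal (L * ‖h - h'‖) := by
  have hU := perturbedSolutions_of_forall_NLTformC_eq hγ0 hγmono hδ hAbar hψ
    (fun ζ hζ => (hell ζ hζ).mono fun p hp => hp.2.le) hu hξ i
  have hcoer : ∀ h ∈ {h : ℂ | ξ + h • Pi.single i 1 ∈ 𝒜}, ∀ᵐ p ∂(pairMeasure d Ω δ),
      rc / 2 ≤ (((fun p : Eu d × Eu d => Acoef N Abar ψ ξ p.1 p.2)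
        + h • fun p : Eu d × Eu d => (ψ i p.1 p.2 : ℂ)) p).re := fun h hh => by
    rw [Acoef_add_smul_single]
    exact (hell _ hh).mono fun p hp => hp.1.le
  refine ⟨max K 0 * (max K 0 * (eLpNorm (nonlocalGrad d γ₁ δ (u ξ)) 2 (pairMeasure d Ω δ)).toReal
    / (rc / 2)) / (rc / 2), fun h hh h' hh' h0 h0' => ?_⟩
  simpa only [diffQuot_eq_smul, map_smul, map_sub, zero_smul, add_zero] using
    hU.eLpNorm_diffQuot_sub_le (measurable_Acoef hAbar hψ ξ).aestronglyMeasurable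
      ((hell ξ hξ).mono fun p hp => hp.2.le)
      (Complex.measurable_ofReal.comp (hψ i)).aestronglyMeasurable (le_max_right K 0)
      (hK.mono fun p hp => by simpa using hp.trans (le_max_left K 0))
      (half_pos hrc) hcoer hh hh' h0 h0'

lemma tendsto_sqrt_NLenergySqC_sub (hγ0 : ∀ r, 0 ≤ γ₁ r) (hγmono : AntitoneOn γ₁ (Ici 0))
    (hδ : 0 < δ) {ι : Type*} {l : Filter ι} {q : ι → Eu d → ℂ}
    (hq : ∀ᶠ j in l, q j ∈ energySpace d Ω γ₁ δ) {w : Eu d → ℂ}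
    (hw : w ∈ energySpace d Ω γ₁ δ) (hlim : Tendsto (fun j => eLpNorm (nonlocalGrad d γ₁ δ (q j)
      - nonlocalGrad d γ₁ δ w) 2 (pairMeasure d Ω δ)) l (𝓝 0)) :
    Tendsto (fun j => Real.sqrt (NLenergySqC d Ω γ₁ δ (fun x => q j x - w x))) l (𝓝 0) := by
  have hlim' := (ENNReal.tendsto_toReal ENNReal.zero_ne_top).comp hlim
  rw [ENNReal.toReal_zero] at hlim'
  refine hlim'.congr' (hq.mono fun j hj => ?_)
  simp only [Function.comp_apply, ← map_sub]
  exact (sqrt_NLenergySqC hγ0 hγmono hδ (sub_mem hj hw)).symm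

end ParametricProblem

end NonlocalDiffusion

open NonlocalDiffusion

theorem solution_holomorphic_in_parameters_general
    (d : ℕ) (hd : 1 ≤ d) (Ω : Set (Eu d))
    (hΩopen : IsOpen Ω) (hΩbdd : Bornology.IsBounded Ω)
    (γ₁ : ℝ → ℝ) (hγ0 : ∀ r, 0 ≤ γ₁ r) (hγmono : AntitoneOn γ₁ (Ici 0))
    (hγnorm : (∫ z in ball (0 : Eu d) 1, γ₁ ‖z‖ * ‖z‖ ^ 2) = (d : ℝ))
    (δ : ℝ) (hδ : 0 < δ)
    (N : ℕ) (Abar : Eu d → Eu d → ℝ) (ψ : Fin N → Eu d → Eu d → ℝ)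
    (hAbarMeas : Measurable fun p : Eu d × Eu d => Abar p.1 p.2)
    (hψMeas : ∀ i, Measurable fun p : Eu d × Eu d => ψ i p.1 p.2)
    (hψBdd : ∀ i, ∃ K : ℝ, ∀ᵐ p ∂(volume.restrict (NLdom d Ω δ ×ˢ NLdom d Ω δ)),
      |ψ i p.1 p.2| ≤ K)
    (𝒜 : Set (Fin N → ℂ)) (h𝒜open : IsOpen 𝒜)
    (rc Rc : ℝ) (hrc : 0 < rc)
    (hell : ∀ ξ ∈ 𝒜, ∀ᵐ p ∂(volume.restrict (NLdom d Ω δ ×ˢ NLdom d Ω δ)),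
      rc / 2 < (Acoef N Abar ψ ξ p.1 p.2).re ∧ ‖Acoef N Abar ψ ξ p.1 p.2‖ < 2 * Rc)
    (F : (Eu d → ℂ) → ℂ)
    (u : (Fin N → ℂ) → Eu d → ℂ)
    (hu : ∀ ξ ∈ 𝒜, NLMemSC d Ω γ₁ δ (u ξ) ∧
      ∀ v : Eu d → ℂ, NLMemSC d Ω γ₁ δ v →
        NLTformC d Ω γ₁ δ (Acoef N Abar ψ ξ) (u ξ) v = F v) :
    ∀ ξ ∈ 𝒜, ∀ i : Fin N, ∃ w : Eu d → ℂ, NLMemSC d Ω γ₁ δ w ∧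
      Tendsto (fun hz : ℂ => Real.sqrt (NLenergySqC d Ω γ₁ δ
          (fun x => (u (ξ + hz • (Pi.single i 1 : Fin N → ℂ)) x - u ξ x) / hz - w x)))
        (nhdsWithin 0 {(0 : ℂ)}ᶜ) (nhds 0) := by
  intro ξ hξ i
  simp_rw [← pairMeasure_eq] at hψBdd hell
  obtain ⟨C, hC, hP⟩ :=
    exists_eLpNorm_le_eLpNorm_nonlocalGrad hd hΩopen hΩbdd hγ0 hγmono hγnorm hδ
  obtain ⟨K, hK⟩ := hψBdd i
  obtain ⟨L, hL⟩ := exists_lipschitz_diffQuot hγ0 hγmono hδ hAbarMeas hψMeas hrc hell hK hu hξ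
  have hmem : ∀ ζ ∈ 𝒜, u ζ ∈ energySpace d Ω γ₁ δ := fun ζ hζ =>
    (mem_energySpace_iff hγ0 hγmono hδ).mpr (hu ζ hζ).1
  have hq : ∀ h ∈ {h : ℂ | ξ + h • (Pi.single i 1 : Fin N → ℂ) ∈ 𝒜},
      (fun x => (u (ξ + h • (Pi.single i 1 : Fin N → ℂ)) x - u ξ x) / h)
        ∈ energySpace d Ω γ₁ δ := fun h hh => by
    rw [diffQuot_eq_smul]
    exact Submodule.smul_mem _ _ (sub_mem (hmem _ hh) (hmem ξ hξ))
  have hs := preimage_add_smul_mem_nhds_zero h𝒜open hξ (Pi.single i 1 : Fin N → ℂ)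
  obtain ⟨w, hw, hlim⟩ :=
    exists_tendsto_nhdsNE_of_lipschitz hC hP hs (fun h hh _ => hq h hh) hL
  exact ⟨w, (mem_energySpace_iff hγ0 hγmono hδ).mp hw, tendsto_sqrt_NLenergySqC_sub hγ0 hγmono hδ
    (Eventually.mono (mem_nhdsWithin_of_mem_nhds (t := {0}ᶜ) hs) hq) hw hlim⟩

/-- Analytic regularity (holomorphic parameter dependence) of the solution of the
parametric nonlocal diffusion problem: on the open set 𝒜 where the complex uniform
ellipticity r_c/2 < Re A, |A| < 2R_c holds, the solution map ξ̂ ↦ u(ξ̂) admits complex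
partial derivatives in each coordinate direction, in the S_δ(Ω;ℂ) seminorm; in
particular it is holomorphic on 𝒜. -/
theorem solution_holomorphic_in_parameters
    (d : ℕ) (hd : 1 ≤ d) (Ω : Set (Eu d))
    (hΩopen : IsOpen Ω) (hΩbdd : Bornology.IsBounded Ω) (hΩne : Ω.Nonempty)
    (γ₁ : ℝ → ℝ) (hγ0 : ∀ r, 0 ≤ γ₁ r) (hγmono : AntitoneOn γ₁ (Ici 0))
    (hγsupp : ∀ r, 1 < r → γ₁ r = 0)
    (hγnorm : (∫ z in ball (0 : Eu d) 1, γ₁ ‖z‖ * ‖z‖ ^ 2) = (d : ℝ))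
    (δ : ℝ) (hδ : 0 < δ)
    (N : ℕ) (Abar : Eu d → Eu d → ℝ) (ψ : Fin N → Eu d → Eu d → ℝ)
    (hAbarMeas : Measurable fun p : Eu d × Eu d => Abar p.1 p.2)
    (hψMeas : ∀ i, Measurable fun p : Eu d × Eu d => ψ i p.1 p.2)
    (hAbarBdd : ∃ K : ℝ, ∀ᵐ p ∂(volume.restrict (NLdom d Ω δ ×ˢ NLdom d Ω δ)),
      |Abar p.1 p.2| ≤ K)
    (hψBdd : ∀ i, ∃ K : ℝ, ∀ᵐ p ∂(volume.restrict (NLdom d Ω δ ×ˢ NLdom d Ω δ)),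
      |ψ i p.1 p.2| ≤ K)
    (𝒜 : Set (Fin N → ℂ)) (h𝒜open : IsOpen 𝒜)
    (rc Rc : ℝ) (hrc : 0 < rc) (hrcRc : rc ≤ Rc)
    (hell : ∀ ξ ∈ 𝒜, ∀ᵐ p ∂(volume.restrict (NLdom d Ω δ ×ˢ NLdom d Ω δ)),
      rc / 2 < (Acoef N Abar ψ ξ p.1 p.2).re ∧ ‖Acoef N Abar ψ ξ p.1 p.2‖ < 2 * Rc)
    (F : (Eu d → ℂ) → ℂ)
    (hFadd : ∀ v w : Eu d → ℂ, F (v + w) = F v + F w)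
    (hFsmul : ∀ (c : ℂ) (v : Eu d → ℂ), F (c • v) = c * F v)
    (M : ℝ) (hM0 : 0 ≤ M)
    (hFbd : ∀ v : Eu d → ℂ, NLMemSC d Ω γ₁ δ v →
      ‖F v‖ ≤ M * Real.sqrt (NLenergySqC d Ω γ₁ δ v))
    (u : (Fin N → ℂ) → Eu d → ℂ)
    (hu : ∀ ξ ∈ 𝒜, NLMemSC d Ω γ₁ δ (u ξ) ∧
      ∀ v : Eu d → ℂ, NLMemSC d Ω γ₁ δ v →
        NLTformC d Ω γ₁ δ (Acoef N Abar ψ ξ) (u ξ) v = F v) :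
    ∀ ξ ∈ 𝒜, ∀ i : Fin N, ∃ w : Eu d → ℂ, NLMemSC d Ω γ₁ δ w ∧
      Tendsto (fun hz : ℂ => Real.sqrt (NLenergySqC d Ω γ₁ δ
          (fun x => (u (ξ + hz • (Pi.single i 1 : Fin N → ℂ)) x - u ξ x) / hz - w x)))
        (nhdsWithin 0 {(0 : ℂ)}ᶜ) (nhds 0) :=
  solution_holomorphic_in_parameters_general d hd Ω hΩopen hΩbdd γ₁ hγ0 hγmono hγnorm δ hδ N Abar ψ
    hAbarMeas hψMeas hψBdd 𝒜 h𝒜open rc Rc hrc hell F u hu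
end
end
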